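/- arXiv:2007.14277 — 13 statements merged into one kernel-verified Lean document; each statement's English description precedes it below -/
import Mathlib

section
/- If G is a d-degenerate infinite graph, then G has at most d pairwise disjoint minimal ruling sets; that is, rul(G) ≤ d. -/
/-- `X` is a ruling set in `G`: `X` is finite and all but finitely many vertices
outside `X` have a neighbor in `X`. -/
def IsRulingSet (G : SimpleGraph ℕ) (X : Set ℕ) : Prop :=
  X.Finite ∧ {v : ℕ | v ∉ X ∧ ∀ x ∈ X, ¬ G.Adj v x}.Finite

/-- `X` is a minimal ruling set in `G`. -/
def IsMinRulingSet (G : SimpleGraph ℕ) (X : Set ℕ) : Prop :=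
  IsRulingSet G X ∧ ∀ Y : Set ℕ, Y ⊆ X → IsRulingSet G Y → Y = X

theorem stmt_3 (d : ℕ) (G : SimpleGraph ℕ)
    (hdeg : ∃ v : ℕ ≃ ℕ, ∀ i : ℕ, {j : ℕ | j < i ∧ G.Adj (v i) (v j)}.ncard ≤ d)
    (F : Fin (d + 1) → Set ℕ)
    (hF : ∀ i, IsMinRulingSet G (F i))
    (hdisj : Pairwise (Function.onFun Disjoint F)) :
    False := by
  obtain ⟨v, hv⟩ := hdeg
  set U : Set ℕ := ⋃ k, F k with hU
  have hUfin : U.Finite := Set.finite_iUnion fun k => (hF k).1.1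
  set E : Set ℕ := ⋃ k, {w : ℕ | w ∉ F k ∧ ∀ x ∈ F k, ¬ G.Adj w x} with hE
  have hEfin : E.Finite := Set.finite_iUnion fun k => (hF k).1.2
  set T : Set ℕ := v ⁻¹' (U ∪ E) ∪ (⇑v.symm '' U) with hT
  have hTfin : T.Finite :=
    Set.Finite.union ((hUfin.union hEfin).preimage v.injective.injOn) (hUfin.image _)
  obtain ⟨m, hm⟩ := hTfin.bddAbove
  set i := m + 1 with hi
  have hiT : ∀ j ∈ T, j < i := fun j hj => Nat.lt_succ_of_le (hm hj)
  have hviU : v i ∉ U ∪ E := fun h => lt_irrefl i (hiT i (Or.inl h))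
  have hx : ∀ k : Fin (d+1), ∃ x, x ∈ F k ∧ G.Adj (v i) x := by
    intro k
    by_contra h
    push_neg at h
    have hvF : v i ∉ F k := fun hmem => hviU (Or.inl (Set.mem_iUnion.2 ⟨k, hmem⟩))
    have hvE : v i ∈ E := Set.mem_iUnion.2 ⟨k, ⟨hvF, fun x hxk => h x hxk⟩⟩
    exact hviU (Or.inr hvE)
  choose x hxF hxAdj using hx
  set S := {j : ℕ | j < i ∧ G.Adj (v i) (v j)} with hS
  have hSfin : S.Finite := (Set.finite_Iio i).subset fun j hj => hj.1
  set f : Fin (d+1) → ℕ := fun k => v.symm (x k) with hf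
  have hfS : ∀ k, f k ∈ S := by
    intro k
    constructor
    · exact hiT _ (Or.inr ⟨x k, Set.mem_iUnion.2 ⟨k, hxF k⟩, rfl⟩)
    · simpa [hf] using hxAdj k
  have hfinj : Function.Injective f := by
    intro a b hab
    have hxe : x a = x b := v.symm.injective hab
    by_contra hne
    exact Set.disjoint_left.1 (hdisj hne) (hxe ▸ hxF a) (hxF b)
  have hcard : d + 1 ≤ S.ncard := by
    have h1 : Set.range f ⊆ S := Set.range_subset_iff.2 hfS
    have h2 : (Set.range f).ncard = d + 1 := by
      rw [show (Set.range f).ncard = Nat.card (Set.range f) from rfl,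
        Nat.card_range_of_injective hfinj, Nat.card_eq_fintype_card, Fintype.card_fin]
    calc d + 1 = (Set.range f).ncard := h2.symm
      _ ≤ S.ncard := Set.ncard_le_ncard h1 hSfin
  have := hv i
  rw [← hS] at this
  omega
end

section
/- Let G be a countably infinite graph such that for every finite set F ⊆ V(G) there exists a vertex v ∉ F with no neighbor in F (i.e., G is 0-ruled), and let H be a graph such that for every finite set W ⊆ V(H) the set of common neighbors of W in H is infinite. Then there is an embedding of G into H whose image is all of V(H). -/
/-!
Back and forth over finite partial embeddings. A finite partial embedding extends to any new
vertex `a` of `G`: send `a` to a common `H`-neighbour of the whole image lying outside it, which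
exists because common neighbourhoods of finite sets are infinite. It extends to any new vertex `b`
of `H`: send to `b` a vertex of `G` outside the domain with no neighbour in it, so that no new edge
has to be preserved. Enumerating `V ⊕ W`, the Rasiowa–Sikorski lemma yields a directed family of
partial embeddings defined on all of `V` and onto all of `W`; its union is the required bijection.
-/

open Order

namespace SimpleGraph

variable {V W : Type*} {G : SimpleGraph V} {H : SimpleGraph W}

variable (G H) in
/-- Finite partial injective homomorphisms from `G` to `H` (not necessarily induced, unlike
`G ↪g H`), encoded by their graphs. -/
def PartialEmbedding : Type _ :=
  { f : Finset (V × W) //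
    ∀ p ∈ f, ∀ q ∈ f, (p.1 = q.1 ↔ p.2 = q.2) ∧ (G.Adj p.1 q.1 → H.Adj p.2 q.2) }

namespace PartialEmbedding

instance : PartialOrder (PartialEmbedding G H) := Subtype.partialOrder _

instance : Inhabited (PartialEmbedding G H) := ⟨⟨∅, by simp⟩⟩

/-- Only one direction of adjacency is required, by symmetry of `G` and `H`. -/
def extend (f : PartialEmbedding G H) (a : V) (b : W) (ha : ∀ q ∈ f.1, q.1 ≠ a)
    (hb : ∀ q ∈ f.1, q.2 ≠ b) (hadj : ∀ q ∈ f.1, G.Adj a q.1 → H.Adj b q.2) :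
    PartialEmbedding G H :=
  ⟨Finset.cons (a, b) f.1 fun h => ha _ h rfl, by
    simp only [Finset.mem_cons]
    rintro p (rfl | hp) q (rfl | hq)
    · simp
    · exact ⟨iff_of_false (ha q hq).symm (hb q hq).symm, hadj q hq⟩
    · exact ⟨iff_of_false (ha p hp) (hb p hp), fun h => (hadj p hp h.symm).symm⟩
    · exact f.2 p hp q hq⟩

section Extend

variable (f : PartialEmbedding G H) {a : V} {b : W} (ha : ∀ q ∈ f.1, q.1 ≠ a)
  (hb : ∀ q ∈ f.1, q.2 ≠ b) (hadj : ∀ q ∈ f.1, G.Adj a q.1 → H.Adj b q.2)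

theorem le_extend : f ≤ f.extend a b ha hb hadj := Finset.subset_cons fun h => ha _ h rfl

theorem mem_extend : (a, b) ∈ (f.extend a b ha hb hadj).1 := by simp [extend]

end Extend

theorem isCofinal_definedAtLeft
    (hH : ∀ F : Set W, F.Finite → {w : W | ∀ u ∈ F, H.Adj w u}.Infinite) (a : V) :
    IsCofinal {g : PartialEmbedding G H | ∃ b, (a, b) ∈ g.1} := by
  intro f
  by_cases hdom : ∃ b, (a, b) ∈ f.1
  · exact ⟨f, hdom, le_rfl⟩
  push Not at hdom
  have himage : (Prod.snd '' (f.1 : Set (V × W))).Finite := f.1.finite_toSet.image _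
  obtain ⟨b, hadj, hnew⟩ := ((hH _ himage).sdiff himage).nonempty
  refine ⟨f.extend a b ?_ ?_ ?_, ⟨b, mem_extend ..⟩, le_extend ..⟩
  · rintro q hq rfl
    exact hdom q.2 hq
  · rintro q hq rfl
    exact hnew ⟨q, hq, rfl⟩
  · exact fun q hq _ => hadj q.2 ⟨q, hq, rfl⟩

theorem isCofinal_definedAtRight
    (hG : ∀ F : Set V, F.Finite → ∃ v ∉ F, ∀ u ∈ F, ¬ G.Adj v u) (b : W) :
    IsCofinal {g : PartialEmbedding G H | ∃ a, (a, b) ∈ g.1} := by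
  intro f
  by_cases hran : ∃ a, (a, b) ∈ f.1
  · exact ⟨f, hran, le_rfl⟩
  push Not at hran
  obtain ⟨a, hnew, hnonadj⟩ := hG _ (f.1.finite_toSet.image Prod.fst)
  refine ⟨f.extend a b ?_ ?_ ?_, ⟨a, mem_extend ..⟩, le_extend ..⟩
  · rintro q hq rfl
    exact hnew ⟨q, hq, rfl⟩
  · rintro q hq rfl
    exact hran q.1 hq
  · exact fun q hq h => absurd h (hnonadj q.1 ⟨q, hq, rfl⟩)

theorem compatible_of_mem_ideal {I : Ideal (PartialEmbedding G H)} {f g : PartialEmbedding G H}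
    (hf : f ∈ I) (hg : g ∈ I) {p q : V × W} (hp : p ∈ f.1) (hq : q ∈ g.1) :
    (p.1 = q.1 ↔ p.2 = q.2) ∧ (G.Adj p.1 q.1 → H.Adj p.2 q.2) := by
  obtain ⟨h, -, hfh, hgh⟩ := I.directed f hf g hg
  exact h.2 p (hfh hp) q (hgh hq)

theorem exists_bijective_hom_of_ideal (I : Ideal (PartialEmbedding G H))
    (hdom : ∀ a, ∃ f ∈ I, ∃ b, (a, b) ∈ f.1) (hran : ∀ b, ∃ f ∈ I, ∃ a, (a, b) ∈ f.1) :
    ∃ φ : G →g H, Function.Bijective φ := by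
  choose f hfI φ hφ using hdom
  refine ⟨⟨φ, fun {u v} huv => (compatible_of_mem_ideal (hfI u) (hfI v) (hφ u) (hφ v)).2 huv⟩,
    fun u v huv => (compatible_of_mem_ideal (hfI u) (hfI v) (hφ u) (hφ v)).1.mpr huv,
    fun b => ?_⟩
  obtain ⟨g, hgI, a, ha⟩ := hran b
  exact ⟨a, (compatible_of_mem_ideal (hfI a) hgI (hφ a) ha).1.mp rfl⟩

end PartialEmbedding

end SimpleGraph

theorem stmt_7_general {V W : Type*} [Countable V] [Countable W]
    (G : SimpleGraph V) (H : SimpleGraph W)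
    (hG : ∀ F : Set V, F.Finite → ∃ v ∉ F, ∀ u ∈ F, ¬ G.Adj v u)
    (hH : ∀ F : Set W, F.Finite → {w : W | ∀ u ∈ F, H.Adj w u}.Infinite) :
    ∃ f : V → W, Function.Injective f ∧ Function.Surjective f ∧
      ∀ u v : V, G.Adj u v → H.Adj (f u) (f v) := by
  open SimpleGraph.PartialEmbedding in
  cases nonempty_encodable V
  cases nonempty_encodable W
  let cofinal : V ⊕ W → Cofinal (SimpleGraph.PartialEmbedding G H) :=
    Sum.elim (fun a => ⟨_, isCofinal_definedAtLeft hH a⟩)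
      (fun b => ⟨_, isCofinal_definedAtRight hG b⟩)
  have meets (i : V ⊕ W) := cofinal_meets_idealOfCofinals default cofinal i
  obtain ⟨φ, hφ⟩ := exists_bijective_hom_of_ideal (idealOfCofinals default cofinal)
    (fun a => (meets (.inl a)).imp fun _ hf => ⟨hf.2, hf.1⟩)
    (fun b => (meets (.inr b)).imp fun _ hf => ⟨hf.2, hf.1⟩)
  exact ⟨φ, hφ.1, hφ.2, fun _ _ => φ.map_adj⟩

theorem stmt_7 {V W : Type*} [Countable V] [Infinite V] [Countable W] [Infinite W]
    (G : SimpleGraph V) (H : SimpleGraph W)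
    (hG : ∀ F : Set V, F.Finite → ∃ v ∉ F, ∀ u ∈ F, ¬ G.Adj v u)
    (hH : ∀ F : Set W, F.Finite → {w : W | ∀ u ∈ F, H.Adj w u}.Infinite) :
    ∃ f : V → W, Function.Injective f ∧ Function.Surjective f ∧
      ∀ u v : V, G.Adj u v → H.Adj (f u) (f v) :=
  stmt_7_general G H hG hH
end

section
/- Let 𝓡 be the Rado graph. A countably infinite graph G is 0-ruled if and only if G is isomorphic to a spanning subgraph of 𝓡; and G is 0-coruled if and only if 𝓡 is isomorphic to a spanning subgraph of G. -/
/-- The Rado graph on `ℕ`: `m < n` are adjacent iff the `m`-th binary digit of `n` is `1`. -/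
def radoGraph : SimpleGraph ℕ where
  Adj m n := (m < n ∧ n.testBit m) ∨ (n < m ∧ m.testBit n)
  symm := by
    constructor
    intro m n h
    exact h.elim Or.inr Or.inl
  loopless := by
    constructor
    intro m h
    exact h.elim (fun h' => lt_irrefl m h'.1) (fun h' => lt_irrefl m h'.1)

/-- `G` is isomorphic to a spanning subgraph of `H`. -/
def IsSpanningSubgraphOf {V W : Type*} (G : SimpleGraph V) (H : SimpleGraph W) : Prop :=
  ∃ f : V → W, Function.Bijective f ∧ ∀ u v : V, G.Adj u v → H.Adj (f u) (f v)

/-!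
A back-and-forth argument shows that a countable 0-ruled graph `G` embeds as a spanning subgraph
of any countable 0-coruled graph `H`: a finite partial map is extended forth by sending a new
vertex of `G` to a vertex of `H` adjacent to the whole current range, and back by taking as
preimage of a new vertex of `H` a vertex of `G` with no neighbour in the current domain. The Rado
graph is both 0-ruled (witness `2 ^ M`) and 0-coruled (witness `2 ^ M - 1`) for `M` beyond a given
finite set, which gives both implications to `𝓡`. Conversely, 0-ruledness passes to spanning
subgraphs and 0-coruledness to spanning supergraphs.
-/

namespace SimpleGraph

variable {α β : Type*} {G : SimpleGraph α} {H : SimpleGraph β}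

def IsZeroRuled (G : SimpleGraph α) : Prop :=
  ∀ F : Set α, F.Finite → ∃ v ∉ F, ∀ u ∈ F, ¬ G.Adj v u

def IsZeroCoruled (G : SimpleGraph α) : Prop :=
  ∀ F : Set α, F.Finite → ∃ v ∉ F, ∀ u ∈ F, G.Adj v u

theorem IsZeroRuled.nonempty (hG : G.IsZeroRuled) : Nonempty α :=
  let ⟨v, _⟩ := hG ∅ Set.finite_empty
  ⟨v⟩

theorem IsZeroCoruled.nonempty (hH : H.IsZeroCoruled) : Nonempty β :=
  let ⟨v, _⟩ := hH ∅ Set.finite_empty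
  ⟨v⟩

end SimpleGraph

open SimpleGraph

namespace IsSpanningSubgraphOf

variable {α β : Type*} {G : SimpleGraph α} {H : SimpleGraph β}

theorem isZeroRuled (h : IsSpanningSubgraphOf G H) (hH : H.IsZeroRuled) : G.IsZeroRuled := by
  obtain ⟨f, hf, hadj⟩ := h
  intro F hF
  obtain ⟨w, hwF, hw⟩ := hH (f '' F) (hF.image f)
  obtain ⟨v, rfl⟩ := hf.2 w
  exact ⟨v, fun hv => hwF ⟨v, hv, rfl⟩, fun u hu huv => hw (f u) ⟨u, hu, rfl⟩ (hadj v u huv)⟩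

theorem isZeroCoruled (h : IsSpanningSubgraphOf G H) (hG : G.IsZeroCoruled) :
    H.IsZeroCoruled := by
  obtain ⟨f, hf, hadj⟩ := h
  intro F hF
  obtain ⟨v, hvF, hv⟩ := hG (f ⁻¹' F) (hF.preimage hf.1.injOn)
  refine ⟨f v, hvF, fun u hu => ?_⟩
  obtain ⟨u, rfl⟩ := hf.2 u
  exact hadj v u (hv u hu)

end IsSpanningSubgraphOf

theorem radoGraph_isZeroRuled : radoGraph.IsZeroRuled := by
  intro F hF
  obtain ⟨N, hN⟩ := hF.bddAbove
  have hlt : ∀ u ∈ F, u < 2 ^ (N + 1) := fun u hu =>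
    (Nat.lt_succ_of_le (hN hu)).trans Nat.lt_two_pow_self
  refine ⟨2 ^ (N + 1), fun hmem => (hlt _ hmem).false, fun u hu hadj => ?_⟩
  rcases hadj with ⟨hlt', _⟩ | ⟨_, hbit⟩
  · exact (hlt u hu).not_gt hlt'
  · rw [Nat.testBit_two_pow_of_ne (by have := hN hu; omega)] at hbit
    exact Bool.false_ne_true hbit

theorem radoGraph_isZeroCoruled : radoGraph.IsZeroCoruled := by
  intro F hF
  obtain ⟨N, hN⟩ := hF.bddAbove
  have hNlt : N + 1 ≤ 2 ^ (N + 1) - 1 := Nat.le_sub_one_of_lt Nat.lt_two_pow_self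
  refine ⟨2 ^ (N + 1) - 1, fun hmem => by have := hN hmem; omega, fun u hu => Or.inr ⟨?_, ?_⟩⟩
  · have := hN hu; omega
  · simpa [Nat.testBit_two_pow_sub_one] using Nat.lt_succ_of_le (hN hu)

namespace SimpleGraph

variable {α β : Type*} {G : SimpleGraph α} {H : SimpleGraph β}

section BackAndForth

variable (G H) in
/-- `p.1 = q.1 ↔ p.2 = q.2` says that the pairs form the graph of an injective partial map. -/
def IsPartialHom (l : List (α × β)) : Prop :=
  ∀ p ∈ l, ∀ q ∈ l, (p.1 = q.1 ↔ p.2 = q.2) ∧ (G.Adj p.1 q.1 → H.Adj p.2 q.2)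

theorem IsPartialHom.cons {l : List (α × β)} {a : α} {b : β} (hl : IsPartialHom G H l)
    (ha : a ∉ l.map Prod.fst) (hb : b ∉ l.map Prod.snd)
    (hab : ∀ q ∈ l, G.Adj a q.1 → H.Adj b q.2) : IsPartialHom G H ((a, b) :: l) := by
  have hne : ∀ q ∈ l, a ≠ q.1 ∧ b ≠ q.2 := fun q hq =>
    ⟨fun h => ha (List.mem_map.2 ⟨q, hq, h.symm⟩), fun h => hb (List.mem_map.2 ⟨q, hq, h.symm⟩)⟩
  intro p hp q hq
  rcases List.mem_cons.1 hp with rfl | hp <;> rcases List.mem_cons.1 hq with rfl | hq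
  · exact ⟨iff_of_true rfl rfl, fun h => (G.loopless.irrefl _ h).elim⟩
  · exact ⟨iff_of_false (hne q hq).1 (hne q hq).2, hab q hq⟩
  · exact ⟨iff_of_false (hne p hp).1.symm (hne p hp).2.symm, fun h => (hab p hp h.symm).symm⟩
  · exact hl p hp q hq

variable (hG : G.IsZeroRuled) (hH : H.IsZeroCoruled)

open Classical in
noncomputable def forth (l : List (α × β)) (a : α) : List (α × β) :=
  if a ∈ l.map Prod.fst then l else (a, (hH _ (l.map Prod.snd).finite_toSet).choose) :: l

open Classical in
noncomputable def back (l : List (α × β)) (b : β) : List (α × β) :=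
  if b ∈ l.map Prod.snd then l else ((hG _ (l.map Prod.fst).finite_toSet).choose, b) :: l

theorem subset_forth (l : List (α × β)) (a : α) : l ⊆ forth hH l a := by
  unfold forth
  split_ifs
  exacts [List.Subset.refl l, List.subset_cons_self _ l]

theorem subset_back (l : List (α × β)) (b : β) : l ⊆ back hG l b := by
  unfold back
  split_ifs
  exacts [List.Subset.refl l, List.subset_cons_self _ l]

theorem exists_mem_forth (l : List (α × β)) (a : α) : ∃ b, (a, b) ∈ forth hH l a := by
  unfold forth
  split_ifs with ha
  · obtain ⟨p, hp, rfl⟩ := List.mem_map.1 ha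
    exact ⟨p.2, hp⟩
  · exact ⟨_, List.mem_cons_self⟩

theorem exists_mem_back (l : List (α × β)) (b : β) : ∃ a, (a, b) ∈ back hG l b := by
  unfold back
  split_ifs with hb
  · obtain ⟨p, hp, rfl⟩ := List.mem_map.1 hb
    exact ⟨p.1, hp⟩
  · exact ⟨_, List.mem_cons_self⟩

theorem IsPartialHom.forth {l : List (α × β)} (hl : IsPartialHom G H l) (a : α) :
    IsPartialHom G H (forth hH l a) := by
  unfold SimpleGraph.forth
  split_ifs with ha
  · exact hl
  obtain ⟨hb, hadj⟩ := (hH _ (l.map Prod.snd).finite_toSet).choose_spec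
  exact hl.cons ha hb fun q hq _ => hadj q.2 (List.mem_map_of_mem hq)

theorem IsPartialHom.back {l : List (α × β)} (hl : IsPartialHom G H l) (b : β) :
    IsPartialHom G H (back hG l b) := by
  unfold SimpleGraph.back
  split_ifs with hb
  · exact hl
  obtain ⟨ha, hnadj⟩ := (hG _ (l.map Prod.fst).finite_toSet).choose_spec
  exact hl.cons ha hb fun q hq h => (hnadj q.1 (List.mem_map_of_mem hq) h).elim

noncomputable def backAndForth (ea : ℕ → α) (eb : ℕ → β) : ℕ → List (α × β)
  | 0 => []
  | k + 1 => back hG (forth hH (backAndForth ea eb k) (ea k)) (eb k)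

theorem isSpanningSubgraphOf_of_chain (c : ℕ → List (α × β)) (hc : ∀ k, IsPartialHom G H (c k))
    (hmono : ∀ k, c k ⊆ c (k + 1)) (hfst : ∀ a, ∃ k b, (a, b) ∈ c k)
    (hsnd : ∀ b, ∃ k a, (a, b) ∈ c k) : IsSpanningSubgraphOf G H := by
  have hle : ∀ {m n}, m ≤ n → c m ⊆ c n := fun h =>
    Nat.le_induction (List.Subset.refl _) (fun _ _ ih => List.Subset.trans ih (hmono _)) _ h
  have hcommon : ∀ {p q : α × β} {m n}, p ∈ c m → q ∈ c n →
      (p.1 = q.1 ↔ p.2 = q.2) ∧ (G.Adj p.1 q.1 → H.Adj p.2 q.2) := fun hp hq =>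
    hc _ _ (hle (le_max_left _ _) hp) _ (hle (le_max_right _ _) hq)
  choose kf f hf using hfst
  refine ⟨f, ⟨fun a a' h => (hcommon (hf a) (hf a')).1.2 h, fun b => ?_⟩,
    fun a a' h => (hcommon (hf a) (hf a')).2 h⟩
  obtain ⟨k, a, hk⟩ := hsnd b
  exact ⟨a, (hcommon (hf a) hk).1.1 rfl⟩

theorem isSpanningSubgraphOf_of_isZeroRuled_of_isZeroCoruled [Countable α] [Countable β]
    (hG : G.IsZeroRuled) (hH : H.IsZeroCoruled) : IsSpanningSubgraphOf G H := by
  have := hG.nonempty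
  have := hH.nonempty
  obtain ⟨ea, hea⟩ := exists_surjective_nat α
  obtain ⟨eb, heb⟩ := exists_surjective_nat β
  let c := backAndForth hG hH ea eb
  have hmono : ∀ k, c k ⊆ c (k + 1) := fun k =>
    List.Subset.trans (subset_forth hH _ _) (subset_back hG _ _)
  refine isSpanningSubgraphOf_of_chain c (fun k => ?_) hmono (fun a => ?_) (fun b => ?_)
  · induction k with
    | zero => simp [c, backAndForth, IsPartialHom]
    | succ k ih => exact (ih.forth hH _).back hG _
  · obtain ⟨k, rfl⟩ := hea a
    obtain ⟨b, hb⟩ := exists_mem_forth hH (c k) (ea k)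
    exact ⟨k + 1, b, subset_back hG _ _ hb⟩
  · obtain ⟨k, rfl⟩ := heb b
    exact ⟨k + 1, exists_mem_back hG _ _⟩

end BackAndForth

end SimpleGraph

theorem stmt_8_general {V : Type*} [Countable V] (G : SimpleGraph V) :
    ((∀ F : Set V, F.Finite → ∃ v ∉ F, ∀ u ∈ F, ¬ G.Adj v u) ↔
      IsSpanningSubgraphOf G radoGraph) ∧
    ((∀ F : Set V, F.Finite → ∃ v ∉ F, ∀ u ∈ F, G.Adj v u) ↔
      IsSpanningSubgraphOf radoGraph G) :=
  ⟨⟨fun hG => isSpanningSubgraphOf_of_isZeroRuled_of_isZeroCoruled hG radoGraph_isZeroCoruled,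
      fun h => h.isZeroRuled radoGraph_isZeroRuled⟩,
    ⟨fun hG => isSpanningSubgraphOf_of_isZeroRuled_of_isZeroCoruled radoGraph_isZeroRuled hG,
      fun h => h.isZeroCoruled radoGraph_isZeroCoruled⟩⟩

theorem stmt_8 {V : Type*} [Countable V] [Infinite V] (G : SimpleGraph V) :
    ((∀ F : Set V, F.Finite → ∃ v ∉ F, ∀ u ∈ F, ¬ G.Adj v u) ↔
      IsSpanningSubgraphOf G radoGraph) ∧
    ((∀ F : Set V, F.Finite → ∃ v ∉ F, ∀ u ∈ F, G.Adj v u) ↔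
      IsSpanningSubgraphOf radoGraph G) :=
  stmt_8_general G
end

section
/- For every 2-coloring of the edges of the complete graph on ℕ, there exist sets R, S ⊆ ℕ such that: (i) R ∪ S is cofinite in ℕ; (ii) if R is infinite then the red graph restricted to R is infinitely connected; and (iii) if S is infinite then the graph of one of the two colors restricted to S is infinitely connected. -/
/-- The graph of color `col` in a 2-coloring `c` of the complete graph on `ℕ`. -/
def colorGraph (c : ℕ → ℕ → Bool) (col : Bool) : SimpleGraph ℕ :=
  SimpleGraph.fromRel (fun u v => c u v = col)

/-- `G` restricted to `S` is infinitely connected: it remains connected after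
deleting any finite set of vertices. -/
def InfConnOn (G : SimpleGraph ℕ) (S : Set ℕ) : Prop :=
  ∀ D : Set ℕ, D.Finite → (G.induce (S \ D)).Connected

/-!
Every infinite set contains an infinite infinitely connected set of one colour: pick a
nonprincipal ultrafilter `U` on it; for one colour, the vertices whose neighbourhood in that
colour lies in `U` form a set in `U`, and any two of them have `U`-many common neighbours.

So some colour, say red, has a maximal infinitely connected set `P`. By maximality every vertex
outside `P` has only finitely many red neighbours in `P`. If infinitely many vertices of `P`
have infinitely many blue neighbours outside `P`, they form together with `Pᶜ` a blue
infinitely connected set. Otherwise almost every vertex of `P` is red-adjacent to almost all of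
`Pᶜ`, so by maximality `Pᶜ` contains no infinite red infinitely connected set. Then any two blue
infinitely connected subsets of `Pᶜ` have a blue infinitely connected union (else discarding
finitely many vertices leaves the two joined almost completely in red), and a maximal one covers
`Pᶜ` up to a finite set.
-/

open Set SimpleGraph

section

variable {G H : SimpleGraph ℕ} {A B K K' M P S T Y Z : Set ℕ}

theorem InfConnOn.infinite (h : InfConnOn G S) : S.Infinite := fun hS => by
  simpa using (h S hS).nonempty

theorem infConnOn_sUnion {C : Set (Set ℕ)} (hne : C.Nonempty)
    (hconn : ∀ P ∈ C, InfConnOn G P) (hinter : ∀ P ∈ C, ∀ Q ∈ C, (P ∩ Q).Infinite) :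
    InfConnOn G (⋃₀ C) := by
  intro D hD
  have hdiff : ⋃₀ C \ D = ⋃₀ ((· \ D) '' C) := by
    ext x
    simp only [sUnion_image, mem_sdiff, mem_sUnion, mem_iUnion, exists_prop]
    tauto
  rw [hdiff]
  refine induce_sUnion_connected_of_pairwise_not_disjoint (hne.image _) ?_ ?_
  · rintro _ _ ⟨P, hP, rfl⟩ ⟨Q, hQ, rfl⟩
    obtain ⟨x, ⟨hxP, hxQ⟩, hxD⟩ := ((hinter P hP Q hQ).sdiff hD).nonempty
    exact ⟨x, ⟨hxP, hxD⟩, hxQ, hxD⟩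
  · rintro _ ⟨P, hP, rfl⟩
    exact hconn P hP D hD

theorem InfConnOn.union_of_adj (hS : InfConnOn G S) (hT : InfConnOn G T)
    (hadj : ∀ D : Set ℕ, D.Finite → ∃ u ∈ S \ D, ∃ v ∈ T \ D, G.Adj u v) :
    InfConnOn G (S ∪ T) := by
  intro D hD
  obtain ⟨u, hu, v, hv, huv⟩ := hadj D hD
  rw [union_sdiff_distrib]
  exact connected_induce_union (hS D hD).preconnected (hT D hD).preconnected hu hv huv

theorem InfConnOn.insert {v : ℕ} (hS : InfConnOn G S) (hv : (G.neighborSet v ∩ S).Infinite) :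
    InfConnOn G (insert v S) := by
  intro D hD
  by_cases hvD : v ∈ D
  · rw [insert_sdiff_of_mem _ hvD]
    exact hS D hD
  obtain ⟨u, ⟨hvu, huS⟩, huD⟩ := (hv.sdiff hD).nonempty
  rw [insert_sdiff_of_notMem _ hvD, insert_eq]
  refine connected_induce_union ?_ (hS D hD).preconnected (mem_singleton v) ⟨huS, huD⟩ hvu
  simp

theorem infConnOn_union_of_anchor (hA : A.Infinite)
    (hpair : ∀ u ∈ A, ∀ v ∈ A, (G.commonNeighbors u v ∩ (A ∪ T)).Infinite)
    (hattach : ∀ w ∈ T, (G.neighborSet w ∩ A).Infinite) : InfConnOn G (A ∪ T) := by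
  intro D hD
  set S := (A ∪ T) \ D
  have hstep : ∀ {x y} (hx : x ∈ S) (hy : y ∈ S), G.Adj x y →
      (G.induce S).Reachable ⟨x, hx⟩ ⟨y, hy⟩ := fun _ _ h => Adj.reachable (G := G.induce S) h
  obtain ⟨a₀, ha₀A, ha₀D⟩ := (hA.sdiff hD).nonempty
  have ha₀ : a₀ ∈ S := ⟨.inl ha₀A, ha₀D⟩
  have hreach : ∀ a (haA : a ∈ A) (haD : a ∉ D),
      (G.induce S).Reachable ⟨a₀, ha₀⟩ ⟨a, .inl haA, haD⟩ := by
    intro a haA haD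
    obtain ⟨x, ⟨⟨hx₀, hxa⟩, hx⟩, hxD⟩ := ((hpair a₀ ha₀A a haA).sdiff hD).nonempty
    exact (hstep ha₀ ⟨hx, hxD⟩ hx₀).trans (hstep _ _ hxa.symm)
  rw [connected_iff_exists_forall_reachable]
  refine ⟨⟨a₀, ha₀⟩, ?_⟩
  rintro ⟨w, hwA | hwT, hwD⟩
  · exact hreach w hwA hwD
  · obtain ⟨a, ⟨hwa, haA⟩, haD⟩ := ((hattach w hwT).sdiff hD).nonempty
    exact (hreach a haA haD).trans (hstep _ _ hwa.symm)

theorem infConnOn_union_of_finite_sdiff_neighborSet (hT : T.Infinite)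
    (hZT : ∀ z ∈ Z, (T \ G.neighborSet z).Finite)
    (hTZ : ∀ t ∈ T, (G.neighborSet t ∩ Z).Infinite) : InfConnOn G (Z ∪ T) := by
  obtain ⟨t, ht⟩ := hT.nonempty
  refine infConnOn_union_of_anchor ((hTZ t ht).mono inter_subset_right)
    (fun u hu v hv => ((hT.sdiff (hZT u hu)).sdiff (hZT v hv)).mono ?_) hTZ
  rintro x ⟨⟨hxT, hxu⟩, hxv⟩
  simp only [mem_sdiff, hxT, true_and, not_not, mem_neighborSet] at hxu hxv
  exact ⟨⟨hxu, hxv⟩, Or.inr hxT⟩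

theorem exists_maximal_infConnOn (hA : InfConnOn G A) (hAY : A ⊆ Y) :
    ∃ P, Maximal (fun X => X ⊆ Y ∧ InfConnOn G X) P := by
  have hmem : A ∈ {X | A ⊆ X ∧ X ⊆ Y ∧ InfConnOn G X} := ⟨subset_rfl, hAY, hA⟩
  refine ⟨⋃₀ {X | A ⊆ X ∧ X ⊆ Y ∧ InfConnOn G X},
    ⟨sUnion_subset fun X hX => hX.2.1, infConnOn_sUnion ⟨A, hmem⟩ (fun X hX => hX.2.2)
      fun X hX X' hX' => hA.infinite.mono (subset_inter hX.1 hX'.1)⟩, ?_⟩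
  exact fun X hX hle => subset_sUnion_of_mem ⟨(subset_sUnion_of_mem hmem).trans hle, hX⟩

theorem finite_sdiff_neighborSet_of_compl_le (hGH : Gᶜ ≤ H) {v : ℕ} {X : Set ℕ}
    (h : (G.neighborSet v ∩ X).Finite) : (X \ H.neighborSet v).Finite := by
  refine (h.insert v).subset fun x ⟨hxX, hxH⟩ => ?_
  by_contra hx
  simp only [mem_insert_iff, mem_inter_iff, mem_neighborSet, not_or, not_and] at hx
  exact hxH (hGH ⟨Ne.symm hx.1, fun hG => hx.2 hG hxX⟩)

theorem infinite_neighborSet_inter_of_compl_le (hGH : Gᶜ ≤ H) {v : ℕ} {X : Set ℕ}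
    (hX : X.Infinite) (h : (G.neighborSet v ∩ X).Finite) : (H.neighborSet v ∩ X).Infinite :=
  (hX.sdiff (finite_sdiff_neighborSet_of_compl_le hGH h)).mono fun x hx =>
    ⟨by simpa [hx.1] using hx.2, hx.1⟩

theorem infConnOn_of_neighborSet_mem {U : Ultrafilter ℕ} (hU : (U : Filter ℕ) ≤ Filter.cofinite)
    (hB : B ∈ U) (hnbr : ∀ v ∈ B, G.neighborSet v ∈ U) : InfConnOn G B := by
  have hinf : ∀ s ∈ U, s.Infinite := fun s hs hfin =>
    Ultrafilter.compl_mem_iff_notMem.1 (hU hfin.compl_mem_cofinite) hs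
  simpa using infConnOn_union_of_anchor (T := ∅) (hinf B hB)
    (fun u hu v hv => hinf _ <| by
      rw [union_empty, commonNeighbors_eq]
      exact U.inter_mem (U.inter_mem (hnbr u hu) (hnbr v hv)) hB)
    (by simp)

theorem exists_infConnOn_subset (hGH : Gᶜ ≤ H) (hZ : Z.Infinite) :
    ∃ B ⊆ Z, InfConnOn G B ∨ InfConnOn H B := by
  have := hZ.cofinite_inf_principal_neBot
  obtain ⟨U, hU⟩ := Ultrafilter.exists_le (Filter.cofinite ⊓ Filter.principal Z)
  have hUcof : (U : Filter ℕ) ≤ Filter.cofinite := hU.trans inf_le_left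
  have hZU : Z ∈ U := hU (Filter.mem_inf_of_right (Filter.mem_principal_self Z))
  have hcover : ∀ v, G.neighborSet v ∈ U ∨ H.neighborSet v ∈ U := fun v =>
    Ultrafilter.union_mem_iff.1 <| Filter.mem_of_superset
      (Filter.le_cofinite_iff_compl_singleton_mem.1 hUcof v) fun w hw => by
        by_contra h
        simp only [mem_union, mem_neighborSet, not_or] at h
        exact h.2 (hGH ⟨Ne.symm hw, h.1⟩)
  have huniv : {v | G.neighborSet v ∈ U} ∪ {v | H.neighborSet v ∈ U} ∈ U :=
    Filter.univ_mem' hcover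
  rcases Ultrafilter.union_mem_iff.1 huniv with h | h
  · exact ⟨Z ∩ _, inter_subset_left, .inl <| infConnOn_of_neighborSet_mem hUcof
      (U.inter_mem hZU h) fun v hv => hv.2⟩
  · exact ⟨Z ∩ _, inter_subset_left, .inr <| infConnOn_of_neighborSet_mem hUcof
      (U.inter_mem hZU h) fun v hv => hv.2⟩

theorem InfConnOn.union_or_exists_infConnOn (hGH : Gᶜ ≤ H) (hK : InfConnOn H K)
    (hK' : InfConnOn H K') : InfConnOn H (K ∪ K') ∨ ∃ M ⊆ K ∪ K', InfConnOn G M := by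
  set L := {x ∈ K | (H.neighborSet x ∩ K').Infinite} ∪
    {x ∈ K' | (H.neighborSet x ∩ K).Infinite}
  by_cases hL : L.Infinite
  · refine .inl (hK.union_of_adj hK' fun D hD => ?_)
    obtain ⟨x, hxL, hxD⟩ := (hL.sdiff hD).nonempty
    rcases hxL with ⟨hxK, hx⟩ | ⟨hxK', hx⟩
    · obtain ⟨y, ⟨hxy, hyK'⟩, hyD⟩ := (hx.sdiff hD).nonempty
      exact ⟨x, ⟨hxK, hxD⟩, y, ⟨hyK', hyD⟩, hxy⟩
    · obtain ⟨y, ⟨hxy, hyK⟩, hyD⟩ := (hx.sdiff hD).nonempty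
      exact ⟨y, ⟨hyK, hyD⟩, x, ⟨hxK', hxD⟩, hxy.symm⟩
  -- Off `L`, every vertex of either set is `G`-adjacent to almost all of the other one.
  have hHG : Hᶜ ≤ G := compl_le_iff_compl_le.1 hGH
  rw [not_infinite] at hL
  refine .inr ⟨(K' \ L) ∪ (K \ L), union_subset (sdiff_subset.trans subset_union_right)
    (sdiff_subset.trans subset_union_left), ?_⟩
  refine infConnOn_union_of_finite_sdiff_neighborSet (hK.infinite.sdiff hL) (fun z hz => ?_)
    fun t ht => ?_
  · have hzK : (H.neighborSet z ∩ K).Finite := not_infinite.1 fun h => hz.2 (.inr ⟨hz.1, h⟩)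
    exact (finite_sdiff_neighborSet_of_compl_le hHG hzK).subset
      (sdiff_subset_sdiff_left sdiff_subset)
  · have htK' : (H.neighborSet t ∩ K').Finite := not_infinite.1 fun h => ht.2 (.inl ⟨ht.1, h⟩)
    exact infinite_neighborSet_inter_of_compl_le hHG (hK'.infinite.sdiff hL)
      (htK'.subset (inter_subset_inter_right _ sdiff_subset))

theorem exists_infConnOn_finite_sdiff (hGH : Gᶜ ≤ H) (hZ : Z.Infinite)
    (hno : ∀ M ⊆ Z, ¬InfConnOn G M) : ∃ Q ⊆ Z, InfConnOn H Q ∧ (Z \ Q).Finite := by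
  have hH : ∀ X ⊆ Z, X.Infinite → ∃ B ⊆ X, InfConnOn H B := fun X hXZ hX => by
    obtain ⟨B, hBX, hB | hB⟩ := exists_infConnOn_subset hGH hX
    · exact (hno B (hBX.trans hXZ) hB).elim
    · exact ⟨B, hBX, hB⟩
  obtain ⟨K, hKZ, hK⟩ := hH Z subset_rfl hZ
  obtain ⟨Q, ⟨hQZ, hQ⟩, hQmax⟩ := exists_maximal_infConnOn hK hKZ
  refine ⟨Q, hQZ, hQ, not_infinite.1 fun hZQ => ?_⟩
  obtain ⟨B, hBZQ, hB⟩ := hH (Z \ Q) sdiff_subset hZQ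
  have hQBZ : Q ∪ B ⊆ Z := union_subset hQZ (hBZQ.trans sdiff_subset)
  have hQB : InfConnOn H (Q ∪ B) := (hQ.union_or_exists_infConnOn hGH hB).resolve_right
    fun ⟨M, hM, hMG⟩ => hno M (hM.trans hQBZ) hMG
  obtain ⟨b, hb⟩ := hB.infinite.nonempty
  exact (hBZQ hb).2 (hQmax ⟨hQBZ, hQB⟩ subset_union_left (subset_union_right hb))

theorem Maximal.not_infConnOn_of_subset_compl (hGH : Gᶜ ≤ H) (hP : Maximal (InfConnOn G) P)
    (hfin : {p ∈ P | (H.neighborSet p ∩ Pᶜ).Infinite}.Finite) (hM : M ⊆ Pᶜ) :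
    ¬InfConnOn G M := by
  intro hMG
  have hMP : InfConnOn G (M ∪ P) := hMG.union_of_adj hP.prop fun D hD => by
    obtain ⟨p, ⟨hpP, hp⟩, hpD⟩ := ((hP.prop.infinite.sdiff hfin).sdiff hD).nonempty
    have hpM : (H.neighborSet p ∩ M).Finite :=
      (not_infinite.1 fun h => hp ⟨hpP, h⟩).subset (inter_subset_inter_right _ hM)
    obtain ⟨x, ⟨hpx, hxM⟩, hxD⟩ := ((infinite_neighborSet_inter_of_compl_le
      (compl_le_iff_compl_le.1 hGH) hMG.infinite hpM).sdiff hD).nonempty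
    exact ⟨x, ⟨hxM, hxD⟩, p, ⟨hpP, hpD⟩, hpx.symm⟩
  obtain ⟨x, hx⟩ := hMG.infinite.nonempty
  exact hM hx (hP.2 hMP subset_union_right (subset_union_left hx))

theorem Maximal.exists_infConnOn_compl (hGH : Gᶜ ≤ H) (hP : Maximal (InfConnOn G) P) :
    ∃ Q, (P ∪ Q)ᶜ.Finite ∧ (Q.Infinite → InfConnOn H Q) := by
  set T := {p ∈ P | (H.neighborSet p ∩ Pᶜ).Infinite}
  by_cases hT : T.Infinite
  · have hfew : ∀ z ∈ Pᶜ, (G.neighborSet z ∩ P).Finite := fun z hz => not_infinite.1 fun h =>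
      hz (hP.2 (hP.prop.insert h) (subset_insert z P) (mem_insert z P))
    refine ⟨Pᶜ ∪ T, by simp [← union_assoc],
      fun _ => infConnOn_union_of_finite_sdiff_neighborSet hT (fun z hz => ?_) fun t ht => ht.2⟩
    exact (finite_sdiff_neighborSet_of_compl_le hGH (hfew z hz)).subset
      (sdiff_subset_sdiff_left (sep_subset _ _))
  by_cases hZ : Pᶜ.Finite
  · exact ⟨∅, by rwa [union_empty], fun h => (h finite_empty).elim⟩
  obtain ⟨Q, -, hQ, hZQ⟩ := exists_infConnOn_finite_sdiff hGH hZ fun M hM =>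
    hP.not_infConnOn_of_subset_compl hGH (not_infinite.1 hT) hM
  exact ⟨Q, by rwa [compl_union, ← sdiff_eq], fun _ => hQ⟩

end

theorem compl_colorGraph_le (c : ℕ → ℕ → Bool) (b : Bool) :
    (colorGraph c b)ᶜ ≤ colorGraph c !b := by
  rintro u v ⟨huv, h⟩
  simp only [colorGraph, fromRel_adj, not_and, not_or] at h ⊢
  exact ⟨huv, .inl (by cases b <;> simpa using (h huv).1)⟩

theorem stmt_10_general (c : ℕ → ℕ → Bool) :
    ∃ R S : Set ℕ,
      (R ∪ S)ᶜ.Finite ∧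
      (R.Infinite → InfConnOn (colorGraph c true) R) ∧
      (S.Infinite → ∃ col : Bool, InfConnOn (colorGraph c col) S) := by
  have hrb : (colorGraph c true)ᶜ ≤ colorGraph c false := compl_colorGraph_le c true
  obtain ⟨B, -, hB | hB⟩ := exists_infConnOn_subset hrb infinite_univ
  · obtain ⟨P, hP⟩ := exists_maximal_infConnOn hB (subset_univ B)
    obtain ⟨Q, hPQ, hQ⟩ := (by simpa using hP : Maximal _ P).exists_infConnOn_compl hrb
    exact ⟨P, Q, hPQ, fun _ => hP.prop.2, fun hQi => ⟨false, hQ hQi⟩⟩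
  · obtain ⟨P, hP⟩ := exists_maximal_infConnOn hB (subset_univ B)
    obtain ⟨Q, hPQ, hQ⟩ :=
      (by simpa using hP : Maximal _ P).exists_infConnOn_compl (compl_le_iff_compl_le.1 hrb)
    exact ⟨Q, P, by rwa [union_comm], hQ, fun _ => ⟨false, hP.prop.2⟩⟩

theorem stmt_10 (c : ℕ → ℕ → Bool) (hc : ∀ u v : ℕ, c u v = c v u) :
    ∃ R S : Set ℕ,
      (R ∪ S)ᶜ.Finite ∧
      (R.Infinite → InfConnOn (colorGraph c true) R) ∧
      (S.Infinite → ∃ col : Bool, InfConnOn (colorGraph c col) S) :=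
  stmt_10_general c
end

section
/- Let T be a tree (connected acyclic graph) with at least one vertex of infinite degree, and let H be a countably infinite graph in which every vertex has infinite degree. Then for every v ∈ V(H), there is an embedding of T into H whose image contains the neighborhood N_H(v) of v. -/
open SimpleGraph

private def myChain {α : Sort*} (a0 : α) (step : ℕ → α → α) : ℕ → α :=
  fun n => Nat.rec a0 step n

private def myInv {V W : Type*} (H : SimpleGraph W) (v : W) (t : V) (P : V → V)
    (A : Finset V) (g : V → W) : Prop :=
  t ∈ A ∧ g t = v ∧ Set.InjOn g ↑A ∧
    ∀ x ∈ A, x ≠ t → P x ∈ A ∧ H.Adj (g (P x)) (g x)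

private theorem myExtend {V W : Type*} [DecidableEq V] {H : SimpleGraph W} {v : W} {t : V}
    {P : V → V} {A : Finset V} {g : V → W} (hInv : myInv H v t P A g)
    {x : V} (hx : x ∉ A) (hxt : x ≠ t) (hPx : P x ∈ A)
    {b : W} (hb : H.Adj (g (P x)) b) (hbnew : b ∉ g '' ↑A) :
    myInv H v t P (insert x A) (Function.update g x b) ∧
      ∀ y ∈ A, Function.update g x b y = g y := by
  obtain ⟨htA, hgt, hinj, hadj⟩ := hInv
  have hPxx : P x ≠ x := fun h => hx (by rwa [h] at hPx)
  have hupd : ∀ y ∈ A, Function.update g x b y = g y := fun y hy =>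
    Function.update_of_ne (fun h => hx (by rwa [h] at hy)) _ _
  refine ⟨⟨Finset.mem_insert_of_mem htA, ?_, ?_, ?_⟩, hupd⟩
  · rw [Function.update_of_ne (Ne.symm hxt)]; exact hgt
  · intro y hy z hz hyz
    rw [Finset.coe_insert, Set.mem_insert_iff] at hy hz
    rcases hy with rfl | hy <;> rcases hz with rfl | hz
    · rfl
    · exfalso
      rw [Function.update_self, hupd z hz] at hyz
      exact hbnew ⟨z, hz, hyz.symm⟩
    · exfalso
      rw [Function.update_self, hupd y hy] at hyz
      exact hbnew ⟨y, hy, hyz⟩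
    · rw [hupd y hy, hupd z hz] at hyz
      exact hinj hy hz hyz
  · intro y hy hyt
    rcases Finset.mem_insert.1 hy with rfl | hy
    · refine ⟨Finset.mem_insert_of_mem hPx, ?_⟩
      rw [Function.update_of_ne hPxx, Function.update_self]
      exact hb
    · obtain ⟨h1, h2⟩ := hadj y hy hyt
      refine ⟨Finset.mem_insert_of_mem h1, ?_⟩
      rw [hupd _ h1, hupd _ hy]
      exact h2

private theorem aux_embed {V W : Type*} [Countable V] [Infinite V] [Countable W]
    (T : SimpleGraph V) (H : SimpleGraph W) (v : W)
    (hH : ∀ w : W, (H.neighborSet w).Infinite)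
    (t : V) (ht : (T.neighborSet t).Infinite)
    (P : V → V) (ρ : V → ℕ)
    (hPt : P t = t)
    (hPρ : ∀ x, x ≠ t → ρ (P x) < ρ x)
    (hPedge : ∀ u u', T.Adj u u' → P u = u' ∨ P u' = u) :
    ∃ f : V → W, Function.Injective f ∧
      (∀ u u' : V, T.Adj u u' → H.Adj (f u) (f u')) ∧
      H.neighborSet v ⊆ Set.range f := by
  classical
  obtain ⟨eV, heV⟩ := exists_surjective_nat V
  have : Countable ↑(H.neighborSet v) := Set.to_countable _
  have : Nonempty ↑(H.neighborSet v) := (hH v).nonempty.to_subtype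
  obtain ⟨wraw, hwraw⟩ := exists_surjective_nat ↑(H.neighborSet v)
  set wgood : ℕ → W := fun n => ↑(wraw n) with hwgood
  have hwmem : ∀ n, wgood n ∈ H.neighborSet v := fun n => (wraw n).2
  have hwcover : ∀ w ∈ H.neighborSet v, ∃ n, wgood n = w := by
    intro w hw
    obtain ⟨n, hn⟩ := hwraw ⟨w, hw⟩
    exact ⟨n, congrArg Subtype.val hn⟩
  -- initial state
  have inv0 : myInv H v t P {t} (fun _ => v) := by
    refine ⟨Finset.mem_singleton_self t, rfl, ?_, ?_⟩
    · intro a ha b hb _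
      simp only [Finset.coe_singleton, Set.mem_singleton_iff] at ha hb
      rw [ha, hb]
    · intro x hx hxt
      exact absurd (Finset.mem_singleton.1 hx) hxt
  -- reachability extension
  have reach : ∀ (n : ℕ) (x : V), ρ x ≤ n → ∀ (A : Finset V) (g : V → W), myInv H v t P A g →
      ∃ A' g', A ⊆ A' ∧ myInv H v t P A' g' ∧ (∀ y ∈ A, g' y = g y) ∧ x ∈ A' := by
    intro n
    induction n with
    | zero =>
      intro x hx A g hInv
      by_cases hxA : x ∈ A
      · exact ⟨A, g, subset_rfl, hInv, fun y _ => rfl, hxA⟩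
      by_cases hxt : x = t
      · exact ⟨A, g, subset_rfl, hInv, fun y _ => rfl, hxt ▸ hInv.1⟩
      · exact absurd (hPρ x hxt) (by omega)
    | succ n ih =>
      intro x hx A g hInv
      by_cases hxA : x ∈ A
      · exact ⟨A, g, subset_rfl, hInv, fun y _ => rfl, hxA⟩
      by_cases hxt : x = t
      · exact ⟨A, g, subset_rfl, hInv, fun y _ => rfl, hxt ▸ hInv.1⟩
      obtain ⟨A1, g1, hsub, hInv1, hagr, hPxA⟩ :=
        ih (P x) (by have := hPρ x hxt; omega) A g hInv
      by_cases hxA1 : x ∈ A1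
      · exact ⟨A1, g1, hsub, hInv1, hagr, hxA1⟩
      obtain ⟨b, hb⟩ := ((hH (g1 (P x))).diff ((A1.finite_toSet).image g1)).nonempty
      obtain ⟨hInv2, hagr2⟩ := myExtend hInv1 hxA1 hxt hPxA hb.1 hb.2
      exact ⟨insert x A1, Function.update g1 x b, hsub.trans (Finset.subset_insert x A1),
        hInv2, fun y hy => (hagr2 y (hsub hy)).trans (hagr y hy), Finset.mem_insert_self x A1⟩
  -- key one-step lemma
  have key : ∀ (n : ℕ) (A : Finset V) (g : V → W), myInv H v t P A g →
      ∃ A' g', A ⊆ A' ∧ myInv H v t P A' g' ∧ (∀ y ∈ A, g' y = g y) ∧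
        eV n ∈ A' ∧ wgood n ∈ g' '' ↑A' := by
    intro n A g hInv
    obtain ⟨A1, g1, hsub, hInv1, hagr, heVn⟩ := reach (ρ (eV n)) (eV n) le_rfl A g hInv
    by_cases hw : wgood n ∈ g1 '' ↑A1
    · exact ⟨A1, g1, hsub, hInv1, hagr, heVn, hw⟩
    obtain ⟨s, hs⟩ := (ht.diff (A1.finite_toSet)).nonempty
    have hsadj : T.Adj t s := hs.1
    have hst : s ≠ t := hsadj.ne'
    have hPs : P s = t := by
      rcases hPedge s t hsadj.symm with h | h
      · exact h
      · rw [hPt] at h; exact absurd h.symm hst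
    have hvadj : H.Adj (g1 (P s)) (wgood n) := by
      rw [hPs, hInv1.2.1]
      exact hwmem n
    obtain ⟨hInv2, hagr2⟩ := myExtend hInv1 hs.2 hst (hPs ▸ hInv1.1) hvadj hw
    refine ⟨insert s A1, Function.update g1 s (wgood n),
      hsub.trans (Finset.subset_insert s A1), hInv2,
      fun y hy => (hagr2 y (hsub hy)).trans (hagr y hy),
      Finset.mem_insert_of_mem heVn, ?_⟩
    exact ⟨s, by simp, Function.update_self _ _ _⟩
  choose F G h1 h2 h3 h4 h5 using key
  -- build the chain
  let S : ℕ → {p : Finset V × (V → W) // myInv H v t P p.1 p.2} :=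
    myChain ⟨({t}, fun _ => v), inv0⟩
      (fun n s => ⟨(F n s.1.1 s.1.2 s.2, G n s.1.1 s.1.2 s.2), h2 n s.1.1 s.1.2 s.2⟩)
  let A : ℕ → Finset V := fun n => (S n).1.1
  let g : ℕ → V → W := fun n => (S n).1.2
  have hmem : ∀ n, myInv H v t P (A n) (g n) := fun n => (S n).2
  have hsub : ∀ n, A n ⊆ A (n + 1) := fun n => h1 n (A n) (g n) (hmem n)
  have hagr : ∀ n, ∀ y ∈ A n, g (n + 1) y = g n y := fun n => h3 n (A n) (g n) (hmem n)
  have heV' : ∀ n, eV n ∈ A (n + 1) := fun n => h4 n (A n) (g n) (hmem n)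
  have hw' : ∀ n, wgood n ∈ g (n + 1) '' ↑(A (n + 1)) := fun n => h5 n (A n) (g n) (hmem n)
  have hmono : ∀ m n, m ≤ n → A m ⊆ A n := by
    intro m n hmn
    induction n, hmn using Nat.le_induction with
    | base => exact subset_rfl
    | succ n hmn ih => exact ih.trans (hsub n)
  have hagr2 : ∀ m (y : V), y ∈ A m → ∀ n, m ≤ n → g n y = g m y := by
    intro m y hy n hmn
    induction n, hmn using Nat.le_induction with
    | base => rfl
    | succ n hmn ih => rw [hagr n y (hmono m n hmn hy), ih]
  set f : V → W := fun x => g ((heV x).choose + 1) x with hf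
  have hxmem : ∀ x : V, x ∈ A ((heV x).choose + 1) := by
    intro x
    have h := heV' (heV x).choose
    rwa [(heV x).choose_spec] at h
  have hfg : ∀ (n : ℕ) (x : V), x ∈ A n → f x = g n x := by
    intro n x hx
    have e1 := hagr2 n x hx (max n ((heV x).choose + 1)) (le_max_left _ _)
    have e2 := hagr2 ((heV x).choose + 1) x (hxmem x) (max n ((heV x).choose + 1))
      (le_max_right _ _)
    show g ((heV x).choose + 1) x = g n x
    rw [← e2, e1]
  refine ⟨f, ?_, ?_, ?_⟩
  · intro x y hxy
    set N := max ((heV x).choose + 1) ((heV y).choose + 1) with hN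
    have hxN : x ∈ A N := hmono _ N (le_max_left _ _) (hxmem x)
    have hyN : y ∈ A N := hmono _ N (le_max_right _ _) (hxmem y)
    have := (hmem N).2.2.1 (Finset.mem_coe.2 hxN) (Finset.mem_coe.2 hyN)
    rw [← hfg N x hxN, ← hfg N y hyN] at this
    exact this hxy
  · intro u u' hadj
    rcases hPedge u u' hadj with h | h
    · have hut : u ≠ t := by
        rintro rfl
        rw [hPt] at h
        exact hadj.ne h
      set N := max ((heV u).choose + 1) ((heV u').choose + 1) with hN
      have huN : u ∈ A N := hmono _ N (le_max_left _ _) (hxmem u)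
      have huN' : u' ∈ A N := hmono _ N (le_max_right _ _) (hxmem u')
      obtain ⟨_, hHadj⟩ := (hmem N).2.2.2 u huN hut
      rw [h] at hHadj
      rw [← hfg N u' huN', ← hfg N u huN] at hHadj
      exact hHadj.symm
    · have hut : u' ≠ t := by
        rintro rfl
        rw [hPt] at h
        exact hadj.ne h.symm
      set N := max ((heV u).choose + 1) ((heV u').choose + 1) with hN
      have huN : u ∈ A N := hmono _ N (le_max_left _ _) (hxmem u)
      have huN' : u' ∈ A N := hmono _ N (le_max_right _ _) (hxmem u')
      obtain ⟨_, hHadj⟩ := (hmem N).2.2.2 u' huN' hut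
      rw [h] at hHadj
      rw [← hfg N u' huN', ← hfg N u huN] at hHadj
      exact hHadj
  · intro w hw
    obtain ⟨n, rfl⟩ := hwcover w hw
    obtain ⟨x, hxA, hgx⟩ := hw' n
    exact ⟨x, by rw [hfg (n + 1) x hxA, hgx]⟩

theorem stmt_11 {V W : Type*} [Countable V] [Infinite V] [Countable W] [Infinite W]
    (T : SimpleGraph V) (hT : T.IsTree)
    (hdeg : ∃ t : V, (T.neighborSet t).Infinite)
    (H : SimpleGraph W) (hH : ∀ w : W, (H.neighborSet w).Infinite)
    (v : W) :
    ∃ f : V → W, Function.Injective f ∧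
      (∀ u u' : V, T.Adj u u' → H.Adj (f u) (f u')) ∧
      H.neighborSet v ⊆ Set.range f := by
  classical
  obtain ⟨t, ht⟩ := hdeg
  set pathTo : ∀ x : V, T.Walk x t := fun x => (hT.existsUnique_path x t).exists.choose
    with hpathTo
  have hpath : ∀ x, (pathTo x).IsPath := fun x => (hT.existsUnique_path x t).exists.choose_spec
  have huniq : ∀ (x : V) (q : T.Walk x t), q.IsPath → q = pathTo x := fun x q hq =>
    (hT.existsUnique_path x t).unique hq (hpath x)
  set P : V → V := fun x => if x = t then t else (pathTo x).getVert 1 with hP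
  have hPt : P t = t := if_pos rfl
  have hPx : ∀ x, x ≠ t → P x = (pathTo x).getVert 1 := fun x hx => if_neg hx
  have hlen : ∀ x, (pathTo x).length = T.dist x t := by
    intro x
    obtain ⟨p, hp, hplen⟩ := (hT.isConnected x t).exists_path_of_dist
    rw [huniq x p hp] at hplen
    exact hplen
  -- ρ decreasing
  have hPρ : ∀ x, x ≠ t → T.dist (P x) t < T.dist x t := by
    intro x hxt
    have hpos : 0 < T.dist x t := (hT.isConnected x t).pos_dist_of_ne hxt
    have hlpos : 0 < (pathTo x).length := by rw [hlen]; exact hpos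
    have hne1 : (pathTo x).getVert 1 ≠ x := by
      have := (pathTo x).adj_getVert_succ (i := 0) hlpos
      rw [Walk.getVert_zero] at this
      exact this.ne'
    have hsup : (pathTo x).getVert 1 ∈ (pathTo x).support :=
      Walk.mem_support_iff_exists_getVert.2 ⟨1, rfl, hlpos⟩
    have hspec := congrArg Walk.length ((pathTo x).take_spec hsup)
    rw [Walk.length_append] at hspec
    have htpos : 0 < ((pathTo x).takeUntil _ hsup).length := by
      rcases Nat.eq_zero_or_pos ((pathTo x).takeUntil _ hsup).length with h0 | h
      · exact absurd (Walk.eq_of_length_eq_zero h0).symm hne1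
      · exact h
    have hdle := SimpleGraph.dist_le ((pathTo x).dropUntil _ hsup)
    rw [hPx x hxt, ← hlen x]
    omega
  -- edge structure
  have hPedge : ∀ u u', T.Adj u u' → P u = u' ∨ P u' = u := by
    intro u u' hadj
    by_cases hsup : u ∈ (pathTo u').support
    · right
      have hu't : u' ≠ t := by
        rintro rfl
        have : Walk.nil = pathTo u' := huniq u' Walk.nil Walk.IsPath.nil
        rw [← this] at hsup
        simp at hsup
        exact hadj.ne' hsup.symm
      -- takeUntil is the edge walk
      have htp : ((pathTo u').takeUntil u hsup).IsPath := (hpath u').takeUntil hsup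
      have hep : (Walk.cons hadj.symm Walk.nil : T.Walk u' u).IsPath := by
        rw [Walk.cons_isPath_iff]
        refine ⟨Walk.IsPath.nil, ?_⟩
        simp [hadj.ne']
      have hPu : (⟨_, htp⟩ : T.Path u' u) = ⟨_, hep⟩ :=
        (isAcyclic_iff_path_unique.1 hT.IsAcyclic) _ _
      have heq : (pathTo u').takeUntil u hsup = Walk.cons hadj.symm Walk.nil :=
        congrArg Subtype.val hPu
      have hspec := (pathTo u').take_spec hsup
      rw [hPx u' hu't, ← hspec, Walk.getVert_append, heq]
      simp [Walk.getVert_zero]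
    · left
      have hut : u ≠ t := by
        rintro rfl
        exact hsup ((pathTo u').end_mem_support)
      have hq : (Walk.cons hadj (pathTo u')).IsPath := by
        rw [Walk.cons_isPath_iff]
        exact ⟨hpath u', hsup⟩
      have := huniq u _ hq
      rw [hPx u hut, ← this]
      simp [Walk.getVert_cons_succ, Walk.getVert_zero]
  exact aux_embed T H v hH t ht P (fun x => T.dist x t) hPt hPρ hPedge
end

section
/- Every 2-coloring of the edges of the complete bipartite graph K_{ℕ,ℕ} admits a partition of its vertex set into a finite set and two sets X and Y, where X is infinitely linked in one color and Y is infinitely linked in one color. -/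
/-- The subgraph of the complete bipartite graph `K_{ℕ,ℕ}` (parts: evens and odds)
consisting of the edges of color `col` in the 2-coloring `c`. -/
def bipColorGraph (c : ℕ → ℕ → Bool) (col : Bool) : SimpleGraph ℕ :=
  SimpleGraph.fromRel (fun u v => u % 2 ≠ v % 2 ∧ c u v = col)

/-- `S` is infinitely linked in `G`: every two distinct vertices of `S` are joined by
infinitely many pairwise internally vertex-disjoint paths in `G`. -/
def InfLinked (G : SimpleGraph ℕ) (S : Set ℕ) : Prop :=
  ∀ u ∈ S, ∀ v ∈ S, u ≠ v → ∃ P : ℕ → G.Walk u v,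
    (∀ n, (P n).IsPath) ∧
    ∀ m n, m ≠ n → ∀ x, x ∈ (P m).support → x ∈ (P n).support → x = u ∨ x = v

/-!
Fix nonprincipal ultrafilters `U` on the odd and `W` on the even vertices. Call `u` attached to
`U` in a color if, whatever finite set is deleted, `u` still reaches `U`-almost every vertex in
that color; vertices attached to the same nonprincipal ultrafilter are infinitely linked, and
attachment propagates along "almost every" (if `W`-almost every vertex is attached to `U`, so is
every vertex attached to `W`). Each even vertex is attached to `U` in its `U`-majority color,
each odd one to `W` in its `W`-majority color.

Let `a` be the color in which `W`-almost every even vertex is attached to `U`, and let `X` be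
the set of vertices attached to `U` in color `a`. If `U`-almost every odd vertex is attached to
`W` in color `!a`, then every vertex outside `X` is attached to `W` in color `!a`. Otherwise
`X` is also the set of vertices attached to `W` in color `a`; a vertex outside `X` has only
finitely many `a`-neighbors in `X`, so it is attached in color `!a` to the ultrafilter on the
other side. If one side of the complement of `X` is finite, the other side is therefore linked
in color `!a`; so is the whole complement if infinitely many `!a`-edges join its two sides;
otherwise, after deleting a finite set, its two sides are completely joined in color `a`.
-/

open Filter

theorem Set.Infinite.exists_ultrafilter_le_cofinite {α : Type*} {S : Set α}
    (hS : S.Infinite) : ∃ 𝒰 : Ultrafilter α, (𝒰 : Filter α) ≤ cofinite ∧ S ∈ 𝒰 :=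
  haveI := hS.cofinite_inf_principal_neBot
  ⟨Ultrafilter.of _, (Ultrafilter.of_le _).trans inf_le_left,
    Ultrafilter.of_le _ (mem_inf_of_right (mem_principal_self S))⟩

namespace SimpleGraph

variable {V : Type*} (G : SimpleGraph V)

def ReachableAvoiding (s : Finset V) (u v : V) : Prop :=
  ∃ p : G.Walk u v, ∀ x ∈ p.support, x ∈ s → x = u ∨ x = v

def InfinitelyConnected (u v : V) : Prop :=
  ∀ s : Finset V, G.ReachableAvoiding s u v

def AttachedTo (𝒰 : Ultrafilter V) (u : V) : Prop :=
  ∀ s : Finset V, ∀ᶠ w in 𝒰, G.ReachableAvoiding s u w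

variable {G} {s : Finset V} {u v w : V}

theorem Adj.reachableAvoiding (h : G.Adj u v) : G.ReachableAvoiding s u v :=
  ⟨h.toWalk, by simp⟩

theorem ReachableAvoiding.symm (h : G.ReachableAvoiding s u v) : G.ReachableAvoiding s v u := by
  obtain ⟨p, hp⟩ := h
  exact ⟨p.reverse, fun x hx hxs => (hp x (by simpa using hx) hxs).symm⟩

theorem ReachableAvoiding.trans (huw : G.ReachableAvoiding s u w)
    (hwv : G.ReachableAvoiding s w v) (hw : w ∉ s) : G.ReachableAvoiding s u v := by
  obtain ⟨p, hp⟩ := huw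
  obtain ⟨q, hq⟩ := hwv
  refine ⟨p.append q, fun x hx hxs => ?_⟩
  rcases (p.mem_support_append_iff q).1 hx with hx | hx
  · exact (hp x hx hxs).imp_right fun h => absurd (h ▸ hxs) hw
  · exact (hq x hx hxs).imp_left fun h => absurd (h ▸ hxs) hw

theorem InfinitelyConnected.symm (h : G.InfinitelyConnected u v) : G.InfinitelyConnected v u :=
  fun s => (h s).symm

theorem ReachableAvoiding.exists_isPath (h : G.ReachableAvoiding s u v) :
    ∃ p : G.Walk u v, p.IsPath ∧ ∀ x ∈ p.support, x ∈ s → x = u ∨ x = v := by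
  classical
  obtain ⟨p, hp⟩ := h
  exact ⟨p.bypass, p.bypass_isPath, fun x hx => hp x (p.support_bypass_subset_support hx)⟩

/-- Each path is chosen to avoid the interiors of all earlier ones. -/
theorem InfinitelyConnected.exists_internallyDisjoint_paths (h : G.InfinitelyConnected u v) :
    ∃ P : ℕ → G.Walk u v, (∀ n, (P n).IsPath) ∧
      ∀ m n, m ≠ n → ∀ x ∈ (P m).support, x ∈ (P n).support → x = u ∨ x = v := by
  classical
  choose p hpath havoid using fun s => (h s).exists_isPath
  let used : ℕ → Finset V := fun n => Nat.rec ∅ (fun _ t => t ∪ (p t).support.toFinset) n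
  have used_mono : Monotone used :=
    monotone_nat_of_le_succ fun n => Finset.subset_union_left
  have key : ∀ m n, m < n → ∀ x ∈ (p (used m)).support, x ∈ (p (used n)).support →
      x = u ∨ x = v := fun m n hmn x hxm hxn =>
    havoid _ x hxn <| used_mono hmn <| Finset.mem_union_right _ (List.mem_toFinset.2 hxm)
  refine ⟨fun n => p (used n), fun n => hpath _, fun m n hmn x hxm hxn => ?_⟩
  rcases hmn.lt_or_gt with hlt | hlt
  · exact key m n hlt x hxm hxn
  · exact key n m hlt x hxn hxm

variable {𝒰 𝒱 : Ultrafilter V}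

theorem attachedTo_of_eventually_adj (h : ∀ᶠ w in 𝒰, G.Adj u w) : G.AttachedTo 𝒰 u :=
  fun _ => h.mono fun _ hw => hw.reachableAvoiding

theorem AttachedTo.infinitelyConnected (h𝒰 : (𝒰 : Filter V) ≤ cofinite)
    (hu : G.AttachedTo 𝒰 u) (hv : G.AttachedTo 𝒰 v) : G.InfinitelyConnected u v := fun s =>
  let ⟨_, huw, hvw, hw⟩ := ((hu s).and ((hv s).and (h𝒰 s.eventually_cofinite_notMem))).exists
  huw.trans hvw.symm hw

theorem attachedTo_of_forall_exists
    (h : ∀ s : Finset V, ∃ z ∉ s, G.ReachableAvoiding s u z ∧ G.AttachedTo 𝒰 z) :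
    G.AttachedTo 𝒰 u := fun s =>
  let ⟨_, hzs, huz, hz⟩ := h s
  (hz s).mono fun _ hzw => huz.trans hzw hzs

theorem AttachedTo.of_eventually (h𝒱 : (𝒱 : Filter V) ≤ cofinite)
    (h : ∀ᶠ z in 𝒱, G.AttachedTo 𝒰 z) (hu : G.AttachedTo 𝒱 u) : G.AttachedTo 𝒰 u :=
  attachedTo_of_forall_exists fun s =>
    let ⟨z, huz, hz, hzs⟩ := ((hu s).and (h.and (h𝒱 s.eventually_cofinite_notMem))).exists
    ⟨z, hzs, huz, hz⟩

theorem attachedTo_of_infinite (h : {w | G.Adj u w ∧ G.AttachedTo 𝒰 w}.Infinite) :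
    G.AttachedTo 𝒰 u :=
  attachedTo_of_forall_exists fun s =>
    let ⟨w, ⟨huw, hw⟩, hws⟩ := h.exists_notMem_finset s
    ⟨w, hws, huw.reachableAvoiding, hw⟩

theorem attachedTo_or_attachedTo {H : SimpleGraph V}
    (h : ∀ᶠ w in 𝒰, G.Adj u w ∨ H.Adj u w) : G.AttachedTo 𝒰 u ∨ H.AttachedTo 𝒰 u :=
  (Ultrafilter.eventually_or.1 h).imp attachedTo_of_eventually_adj attachedTo_of_eventually_adj

theorem attachedTo_of_not_attachedTo {H : SimpleGraph V} (h𝒰 : (𝒰 : Filter V) ≤ cofinite)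
    (h : ∀ᶠ w in 𝒰, (G.Adj u w ∨ H.Adj u w) ∧ G.AttachedTo 𝒰 w) (hu : ¬ G.AttachedTo 𝒰 u) :
    H.AttachedTo 𝒰 u := by
  have hfin : {w | G.Adj u w ∧ G.AttachedTo 𝒰 w}.Finite :=
    Set.not_infinite.1 (mt attachedTo_of_infinite hu)
  refine attachedTo_of_eventually_adj <| (h.and (h𝒰 hfin.eventually_cofinite_notMem)).mono ?_
  rintro w ⟨⟨hadj, hw⟩, hfw⟩
  exact hadj.resolve_left fun huw => hfw ⟨huw, hw⟩

theorem pairwise_infinitelyConnected_of_attachedTo {S : Set V}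
    (h𝒰 : (𝒰 : Filter V) ≤ cofinite) (hS : ∀ u ∈ S, G.AttachedTo 𝒰 u) :
    S.Pairwise G.InfinitelyConnected :=
  fun u hu v hv _ => (hS u hu).infinitelyConnected h𝒰 (hS v hv)

theorem pairwise_infinitelyConnected_union {P Q : Set V} (h𝒰 : (𝒰 : Filter V) ≤ cofinite)
    (h𝒱 : (𝒱 : Filter V) ≤ cofinite) (hP : ∀ z ∈ P, G.AttachedTo 𝒰 z)
    (hQ : ∀ w ∈ Q, G.AttachedTo 𝒱 w)
    (hbridge : ∀ s : Finset V, ∃ z ∈ P, ∃ w ∈ Q, z ∉ s ∧ w ∉ s ∧ G.Adj z w) :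
    (P ∪ Q).Pairwise G.InfinitelyConnected := by
  have across : ∀ u ∈ P, ∀ v ∈ Q, G.InfinitelyConnected u v := fun u hu v hv s => by
    obtain ⟨z, hz, w, hw, hzs, hws, hzw⟩ := hbridge s
    have hwv := (hQ w hw).infinitelyConnected h𝒱 (hQ v hv) s
    exact ((hP u hu).infinitelyConnected h𝒰 (hP z hz) s).trans
      (hzw.reachableAvoiding.trans hwv hws) hzs
  exact Set.pairwise_union.2 ⟨pairwise_infinitelyConnected_of_attachedTo h𝒰 hP,
    pairwise_infinitelyConnected_of_attachedTo h𝒱 hQ,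
    fun u hu v hv _ => ⟨across u hu v hv, (across u hu v hv).symm⟩⟩

theorem pairwise_infinitelyConnected_of_forall_adj {P Q : Set V} (hP : P.Infinite)
    (hQ : Q.Infinite) (hPQ : ∀ z ∈ P, ∀ w ∈ Q, G.Adj z w) :
    (P ∪ Q).Pairwise G.InfinitelyConnected := by
  obtain ⟨𝒰, h𝒰, hQ𝒰⟩ := Set.Infinite.exists_ultrafilter_le_cofinite hQ
  have hPatt : ∀ z ∈ P, G.AttachedTo 𝒰 z := fun z hz =>
    attachedTo_of_eventually_adj (mem_of_superset hQ𝒰 (hPQ z hz))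
  have hQatt : ∀ w ∈ Q, G.AttachedTo 𝒰 w := fun w hw =>
    attachedTo_of_infinite (hP.mono fun z hz => ⟨(hPQ z hz w hw).symm, hPatt z hz⟩)
  exact pairwise_infinitelyConnected_of_attachedTo h𝒰 fun u hu => hu.elim (hPatt u) (hQatt u)

/-- Either infinitely many `H`-edges join `P` to `Q`, and then `H` links `P ∪ Q`; or they
stop outside a finite set, beyond which `P` and `Q` are completely joined in `G`. -/
theorem exists_finite_pairwise_infinitelyConnected {H : SimpleGraph V} {P Q : Set V}
    (h𝒰 : (𝒰 : Filter V) ≤ cofinite) (h𝒱 : (𝒱 : Filter V) ≤ cofinite)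
    (hP : ∀ z ∈ P, H.AttachedTo 𝒰 z) (hQ : ∀ w ∈ Q, H.AttachedTo 𝒱 w)
    (hPQ : ∀ z ∈ P, ∀ w ∈ Q, G.Adj z w ∨ H.Adj z w) :
    ∃ A : Set V, A.Finite ∧ A ⊆ P ∪ Q ∧
      (((P ∪ Q) \ A).Pairwise G.InfinitelyConnected ∨
        ((P ∪ Q) \ A).Pairwise H.InfinitelyConnected) := by
  by_cases hPfin : P.Finite
  · refine ⟨P, hPfin, Set.subset_union_left, Or.inr ?_⟩
    exact pairwise_infinitelyConnected_of_attachedTo h𝒱 fun w hw =>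
      hQ w (hw.1.resolve_left hw.2)
  by_cases hQfin : Q.Finite
  · refine ⟨Q, hQfin, Set.subset_union_right, Or.inr ?_⟩
    exact pairwise_infinitelyConnected_of_attachedTo h𝒰 fun z hz =>
      hP z (hz.1.resolve_right hz.2)
  by_cases hbridge : ∀ s : Finset V, ∃ z ∈ P, ∃ w ∈ Q, z ∉ s ∧ w ∉ s ∧ H.Adj z w
  · refine ⟨∅, Set.finite_empty, Set.empty_subset _, Or.inr ?_⟩
    rw [Set.sdiff_empty]
    exact pairwise_infinitelyConnected_union h𝒰 h𝒱 hP hQ hbridge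
  push Not at hbridge
  obtain ⟨s, hs⟩ := hbridge
  refine ⟨(P ∪ Q) ∩ s, s.finite_toSet.subset Set.inter_subset_right, Set.inter_subset_left,
    Or.inl ?_⟩
  rw [Set.sdiff_self_inter, Set.union_sdiff_distrib]
  exact pairwise_infinitelyConnected_of_forall_adj (Set.Infinite.sdiff hPfin s.finite_toSet)
    (Set.Infinite.sdiff hQfin s.finite_toSet) fun z hz w hw =>
      (hPQ z hz.1 w hw.1).resolve_right (hs z hz.1 w hw.1 hz.2 hw.2)

end SimpleGraph

open SimpleGraph

theorem infLinked_of_pairwise {G : SimpleGraph ℕ} {S : Set ℕ}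
    (h : S.Pairwise G.InfinitelyConnected) : InfLinked G S :=
  fun _ hu _ hv huv => (h hu hv huv).exists_internallyDisjoint_paths

section BipColorGraph

variable (c : ℕ → ℕ → Bool)

theorem bipColorGraph_adj_or_adj {u w : ℕ} (h : u % 2 ≠ w % 2) (col : Bool) :
    (bipColorGraph c col).Adj u w ∨ (bipColorGraph c (!col)).Adj u w := by
  have huw : u ≠ w := fun huw => h (congrArg (· % 2) huw)
  simp only [bipColorGraph, fromRel_adj]
  cases hc : c u w <;> cases col <;> simp_all

variable {c} {𝒰 𝒲 : Ultrafilter ℕ}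

theorem bipColorGraph_attachedTo_or {u : ℕ} (hu : ∀ᶠ w in 𝒰, u % 2 ≠ w % 2) (col : Bool) :
    (bipColorGraph c col).AttachedTo 𝒰 u ∨ (bipColorGraph c (!col)).AttachedTo 𝒰 u :=
  attachedTo_or_attachedTo (hu.mono fun _ h => bipColorGraph_adj_or_adj c h col)

theorem eventually_mod_two_ne {l : Filter ℕ} {q u : ℕ} (h : ∀ᶠ w in l, w % 2 = q)
    (hu : u % 2 ≠ q) : ∀ᶠ w in l, u % 2 ≠ w % 2 :=
  h.mono fun _ hw => hw ▸ hu

theorem exists_eventually_bipColorGraph_attachedTo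
    (h : ∀ᶠ u in 𝒲, ∀ᶠ w in 𝒰, u % 2 ≠ w % 2) :
    ∃ a, ∀ᶠ u in 𝒲, (bipColorGraph c a).AttachedTo 𝒰 u :=
  (Ultrafilter.eventually_or.1 (h.mono fun _ hu => bipColorGraph_attachedTo_or hu true)).elim
    (⟨true, ·⟩) (⟨false, ·⟩)

variable {U W : Ultrafilter ℕ}

theorem bipColorGraph_attachedTo_of_not_attachedTo {a : Bool}
    (hU : (U : Filter ℕ) ≤ cofinite) (hW : (W : Filter ℕ) ≤ cofinite)
    (hOU : ∀ᶠ n in U, n % 2 = 1) (hEW : ∀ᶠ n in W, n % 2 = 0)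
    (haW : ∀ᶠ u in W, (bipColorGraph c a).AttachedTo U u)
    (hbU : ∀ᶠ v in U, (bipColorGraph c (!a)).AttachedTo W v) {n : ℕ}
    (hn : ¬ (bipColorGraph c a).AttachedTo U n) : (bipColorGraph c (!a)).AttachedTo W n := by
  rcases Nat.mod_two_eq_zero_or_one n with h | h
  · exact ((bipColorGraph_attachedTo_or (eventually_mod_two_ne hOU (by omega)) a).resolve_left
      hn).of_eventually hU hbU
  · exact (bipColorGraph_attachedTo_or (eventually_mod_two_ne hEW (by omega)) a).resolve_left
      fun h => hn (h.of_eventually hW haW)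

theorem bipColorGraph_exists_finite_compl_pairwise {a : Bool}
    (hU : (U : Filter ℕ) ≤ cofinite) (hW : (W : Filter ℕ) ≤ cofinite)
    (hOU : ∀ᶠ n in U, n % 2 = 1) (hEW : ∀ᶠ n in W, n % 2 = 0)
    (haW : ∀ᶠ u in W, (bipColorGraph c a).AttachedTo U u)
    (haU : ∀ᶠ v in U, (bipColorGraph c a).AttachedTo W v) :
    ∃ A : Set ℕ, A.Finite ∧ A ⊆ {n | (bipColorGraph c a).AttachedTo U n}ᶜ ∧ ∃ col,
      ({n | (bipColorGraph c a).AttachedTo U n}ᶜ \ A).Pairwise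
        (bipColorGraph c col).InfinitelyConnected := by
  set G := bipColorGraph c a
  have hWU : ∀ n, G.AttachedTo W n → G.AttachedTo U n := fun n h => h.of_eventually hW haW
  have hUW : ∀ n, G.AttachedTo U n → G.AttachedTo W n := fun n h => h.of_eventually hU haU
  set P := {n | n % 2 = 0 ∧ ¬ G.AttachedTo U n}
  set Q := {n | n % 2 = 1 ∧ ¬ G.AttachedTo U n}
  have hPQ : ∀ z ∈ P, ∀ w ∈ Q, G.Adj z w ∨ (bipColorGraph c (!a)).Adj z w :=
    fun z hz w hw => bipColorGraph_adj_or_adj c (by rw [hz.1, hw.1]; decide) a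
  have hP : ∀ z ∈ P, (bipColorGraph c (!a)).AttachedTo U z := fun z hz =>
    attachedTo_of_not_attachedTo hU ((hOU.and (haU.mono hWU)).mono fun w hw =>
      ⟨bipColorGraph_adj_or_adj c (by rw [hz.1, hw.1]; decide) a, hw.2⟩) hz.2
  have hQ : ∀ w ∈ Q, (bipColorGraph c (!a)).AttachedTo W w := fun w hw =>
    attachedTo_of_not_attachedTo hW ((hEW.and (haW.mono hUW)).mono fun z hz =>
      ⟨bipColorGraph_adj_or_adj c (by rw [hz.1, hw.1]; decide) a, hz.2⟩)
      fun h => hw.2 (hWU w h)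
  have hPQ_eq : P ∪ Q = {n | G.AttachedTo U n}ᶜ := by
    ext n
    rcases Nat.mod_two_eq_zero_or_one n with h | h <;> simp [P, Q, h]
  obtain ⟨A, hA, hAPQ, hlink⟩ := exists_finite_pairwise_infinitelyConnected hU hW hP hQ hPQ
  rw [hPQ_eq] at hAPQ hlink
  exact ⟨A, hA, hAPQ, hlink.elim (⟨a, ·⟩) (⟨!a, ·⟩)⟩

end BipColorGraph

theorem stmt_12_general (c : ℕ → ℕ → Bool) :
    ∃ A X Y : Set ℕ,
      A.Finite ∧
      Disjoint A X ∧ Disjoint A Y ∧ Disjoint X Y ∧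
      A ∪ X ∪ Y = Set.univ ∧
      (∃ col : Bool, InfLinked (bipColorGraph c col) X) ∧
      (∃ col : Bool, InfLinked (bipColorGraph c col) Y) := by
  obtain ⟨U, hU, hOU⟩ := Set.Infinite.exists_ultrafilter_le_cofinite
    (Nat.frequently_atTop_iff_infinite.1 (Nat.frequently_mod_eq one_lt_two))
  obtain ⟨W, hW, hEW⟩ := Set.Infinite.exists_ultrafilter_le_cofinite
    (Nat.frequently_atTop_iff_infinite.1 (Nat.frequently_mod_eq two_pos))
  obtain ⟨a, haW⟩ := exists_eventually_bipColorGraph_attachedTo (c := c)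
    (Eventually.mono hEW fun _ hu => eventually_mod_two_ne hOU (by omega))
  obtain ⟨b, hbU⟩ := exists_eventually_bipColorGraph_attachedTo (c := c)
    (Eventually.mono hOU fun _ hv => eventually_mod_two_ne hEW (by omega))
  set T := {n | (bipColorGraph c a).AttachedTo U n}
  obtain ⟨A, hA, hAT, col, hY⟩ : ∃ A : Set ℕ, A.Finite ∧ A ⊆ Tᶜ ∧
      ∃ col, (Tᶜ \ A).Pairwise (bipColorGraph c col).InfinitelyConnected := by
    rcases Bool.eq_or_eq_not b a with rfl | rfl
    · exact bipColorGraph_exists_finite_compl_pairwise hU hW hOU hEW haW hbU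
    · refine ⟨∅, Set.finite_empty, Set.empty_subset _, !a, ?_⟩
      rw [Set.sdiff_empty]
      exact pairwise_infinitelyConnected_of_attachedTo hW fun n hn =>
        bipColorGraph_attachedTo_of_not_attachedTo hU hW hOU hEW haW hbU hn
  refine ⟨A, T, Tᶜ \ A, hA, Set.subset_compl_iff_disjoint_right.1 hAT,
    disjoint_sdiff_self_right, disjoint_compl_right.mono_right Set.sdiff_subset, ?_,
    ⟨a, infLinked_of_pairwise (pairwise_infinitelyConnected_of_attachedTo hU fun _ h => h)⟩,
    ⟨col, infLinked_of_pairwise hY⟩⟩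
  ext n
  by_cases hn : n ∈ A <;> by_cases hnT : n ∈ T <;> simp [hn, hnT]

theorem stmt_12 (c : ℕ → ℕ → Bool) (hc : ∀ u v : ℕ, c u v = c v u) :
    ∃ A X Y : Set ℕ,
      A.Finite ∧
      Disjoint A X ∧ Disjoint A Y ∧ Disjoint X Y ∧
      A ∪ X ∪ Y = Set.univ ∧
      (∃ col : Bool, InfLinked (bipColorGraph c col) X) ∧
      (∃ col : Bool, InfLinked (bipColorGraph c col) Y) :=
  stmt_12_general c
end

section
/- Let T be a tree of unbounded radius with no one-way infinite path. Then there exists a vertex v₀ ∈ V(T) such that T contains an increasing star with center v₀: i.e., there are distinct vertices v₁, v₂, ... and pairwise internally disjoint paths P₁, P₂, ... in T, where P_i goes from v₀ to v_i and the lengths of the P_i are strictly increasing. -/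
open SimpleGraph

private lemma getVert_one_append {V : Type*} {T : SimpleGraph V} {a b c : V}
    (q : T.Walk a b) (r : T.Walk b c) (h : a ≠ b) :
    (q.append r).getVert 1 = q.getVert 1 := by
  cases q with
  | nil => exact absurd rfl h
  | cons h' q' =>
    simp [SimpleGraph.Walk.cons_append, SimpleGraph.Walk.getVert_cons_succ,
      SimpleGraph.Walk.getVert_zero]

private lemma split_lemma {V : Type*} {T : SimpleGraph V} (hc : T.Connected) (u v₀ w : V)
    (p : T.Walk v₀ w) (hlen : p.length = T.dist v₀ w) (hne : v₀ ≠ w)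
    (hSub : T.dist u w = T.dist u v₀ + T.dist v₀ w) :
    T.Adj v₀ (p.getVert 1) ∧ T.dist u (p.getVert 1) = T.dist u v₀ + 1 ∧
      T.dist u w = T.dist u (p.getVert 1) + T.dist (p.getVert 1) w ∧
      T.dist v₀ w = T.dist (p.getVert 1) w + 1 := by
  obtain ⟨c, hadj, q, rfl⟩ := SimpleGraph.Walk.exists_eq_cons_of_ne hne p
  have hg : (SimpleGraph.Walk.cons hadj q).getVert 1 = c := by
    simp [SimpleGraph.Walk.getVert_cons_succ, SimpleGraph.Walk.getVert_zero]
  rw [hg]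
  have h1 : T.dist c w ≤ q.length := SimpleGraph.dist_le q
  have h2 : q.length + 1 = T.dist v₀ w := by simpa using hlen
  have h3 : T.dist v₀ w ≤ T.dist v₀ c + T.dist c w := hc.dist_triangle
  have h4 : T.dist v₀ c ≤ 1 := by
    simpa using SimpleGraph.dist_le (SimpleGraph.Walk.cons hadj SimpleGraph.Walk.nil)
  have h5 : T.dist u c ≤ T.dist u v₀ + T.dist v₀ c := hc.dist_triangle
  have h6 : T.dist u v₀ ≤ T.dist u c + T.dist c v₀ := hc.dist_triangle
  have h7 : T.dist c v₀ = T.dist v₀ c := SimpleGraph.dist_comm ..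
  have h8 : T.dist u w ≤ T.dist u c + T.dist c w := hc.dist_triangle
  exact ⟨hadj, by omega, by omega, by omega⟩

theorem stmt_13 {V : Type*} [Countable V] [Infinite V]
    (T : SimpleGraph V) (hT : T.IsTree)
    (hrad : ¬ ∃ (u : V) (k : ℕ), ∀ v : V, T.dist u v ≤ k)
    (hnopath : ¬ ∃ x : ℕ → V, Function.Injective x ∧ ∀ i : ℕ, T.Adj (x i) (x (i + 1))) :
    ∃ (v₀ : V) (v : ℕ → V), Function.Injective v ∧ (∀ n, v n ≠ v₀) ∧
      ∃ P : (n : ℕ) → T.Walk v₀ (v n),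
        (∀ n, (P n).IsPath) ∧
        (∀ m n, m ≠ n → ∀ x, x ∈ (P m).support → x ∈ (P n).support → x = v₀) ∧
        StrictMono (fun n => (P n).length) := by
  classical
  obtain ⟨u⟩ : Nonempty V := inferInstance
  have hc : T.Connected := hT.isConnected
  have hac : T.IsAcyclic := hT.IsAcyclic
  push_neg at hrad
  have hu : ∀ k : ℕ, ∃ w, T.dist u w = T.dist u u + T.dist u w ∧ k ≤ T.dist u w := by
    intro k
    obtain ⟨w, hw⟩ := hrad u k
    exact ⟨w, by rw [SimpleGraph.dist_self]; ring, le_of_lt hw⟩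
  by_cases hH : ∃ v, (∀ k : ℕ, ∃ w, T.dist u w = T.dist u v + T.dist v w ∧ k ≤ T.dist v w) ∧
      ∀ c, T.Adj v c → T.dist u c = T.dist u v + 1 →
        ¬ (∀ k : ℕ, ∃ w, T.dist u w = T.dist u c + T.dist c w ∧ k ≤ T.dist c w)
  · -- positive case: build the star
    obtain ⟨v₀, hv₀, hch⟩ := hH
    -- bounds for non-heavy children
    have hbound : ∀ c, T.Adj v₀ c → T.dist u c = T.dist u v₀ + 1 →
        ∃ k : ℕ, ∀ w, T.dist u w = T.dist u c + T.dist c w → T.dist c w < k := by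
      intro c h1 h2
      have h := hch c h1 h2
      push_neg at h
      exact h
    let B : V → ℕ := fun c =>
      if h : ∃ k : ℕ, ∀ w, T.dist u w = T.dist u c + T.dist c w → T.dist c w < k
      then h.choose else 0
    have hBspec : ∀ c, (∃ k : ℕ, ∀ w, T.dist u w = T.dist u c + T.dist c w → T.dist c w < k) →
        ∀ w, T.dist u w = T.dist u c + T.dist c w → T.dist c w < B c := by
      intro c h
      simp only [B, dif_pos h]
      exact h.choose_spec
    -- shortest paths from v₀
    let Pf : ∀ w : V, {p : T.Walk v₀ w // p.IsPath ∧ p.length = T.dist v₀ w} := fun w =>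
      ⟨(hc.exists_path_of_dist v₀ w).choose, (hc.exists_path_of_dist v₀ w).choose_spec⟩
    let cf : V → V := fun w => (Pf w).1.getVert 1
    -- the recursive sequence of witnesses
    let next : V → V := fun w => (hv₀ (T.dist v₀ w + B (cf w) + 2)).choose
    let s : ℕ → V := fun n => next^[n] ((hv₀ 1).choose)
    have hs0 : s 0 = (hv₀ 1).choose := rfl
    have hssucc : ∀ n, s (n + 1) = next (s n) := fun n =>
      Function.iterate_succ_apply' next n _
    have hGood : ∀ n, T.dist u (s n) = T.dist u v₀ + T.dist v₀ (s n) ∧ 1 ≤ T.dist v₀ (s n) := by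
      intro n
      cases n with
      | zero => exact (hv₀ 1).choose_spec
      | succ n =>
        rw [hssucc n]
        exact ⟨(hv₀ (T.dist v₀ (s n) + B (cf (s n)) + 2)).choose_spec.1,
          le_trans (by omega) (hv₀ (T.dist v₀ (s n) + B (cf (s n)) + 2)).choose_spec.2⟩
    have hstep : ∀ n, T.dist v₀ (s n) + B (cf (s n)) + 2 ≤ T.dist v₀ (s (n + 1)) := by
      intro n
      rw [hssucc n]
      exact (hv₀ (T.dist v₀ (s n) + B (cf (s n)) + 2)).choose_spec.2
    have hmono : StrictMono (fun n => T.dist v₀ (s n)) := by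
      apply strictMono_nat_of_lt_succ
      intro n
      have := hstep n
      omega
    have hne : ∀ n, v₀ ≠ s n := by
      intro n h
      have := (hGood n).2
      rw [← h, SimpleGraph.dist_self] at this
      omega
    have hfacts : ∀ n, T.Adj v₀ (cf (s n)) ∧ T.dist u (cf (s n)) = T.dist u v₀ + 1 ∧
        T.dist u (s n) = T.dist u (cf (s n)) + T.dist (cf (s n)) (s n) ∧
        T.dist v₀ (s n) = T.dist (cf (s n)) (s n) + 1 := fun n =>
      split_lemma hc u v₀ (s n) (Pf (s n)).1 (Pf (s n)).2.2 (hne n) (hGood n).1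
    -- the chosen children are pairwise distinct
    have hcdist : ∀ m n, m < n → cf (s m) ≠ cf (s n) := by
      intro m n hmn heq
      have hfm := hfacts m
      have hfn := hfacts n
      have hB1 : T.dist (cf (s m)) (s n) < B (cf (s m)) := by
        apply hBspec (cf (s m)) (hbound _ hfm.1 hfm.2.1)
        rw [heq]
        exact hfn.2.2.1
      have hle : T.dist v₀ (s (m + 1)) ≤ T.dist v₀ (s n) := hmono.monotone (by omega)
      have hstepm := hstep m
      have h4 := hfn.2.2.2
      rw [← heq] at h4
      omega
    -- assemble the answer
    refine ⟨v₀, s, ?_, ?_, fun n => (Pf (s n)).1, fun n => (Pf (s n)).2.1, ?_, ?_⟩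
    · intro a b hab
      exact hmono.injective (by rw [hab])
    · intro n h
      exact hne n h.symm
    · intro m n hmn x hxm hxn
      by_contra hx
      have hxv : v₀ ≠ x := fun h => hx h.symm
      have htm : ((Pf (s m)).1.takeUntil x hxm).IsPath := (Pf (s m)).2.1.takeUntil hxm
      have htn : ((Pf (s n)).1.takeUntil x hxn).IsPath := (Pf (s n)).2.1.takeUntil hxn
      have hpq : (Pf (s m)).1.takeUntil x hxm = (Pf (s n)).1.takeUntil x hxn := by
        have := hac.path_unique ⟨(Pf (s m)).1.takeUntil x hxm, htm⟩
          ⟨(Pf (s n)).1.takeUntil x hxn, htn⟩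
        exact Subtype.mk_eq_mk.mp this
      have hgm : (Pf (s m)).1.getVert 1 = ((Pf (s m)).1.takeUntil x hxm).getVert 1 := by
        conv_lhs => rw [← SimpleGraph.Walk.take_spec (Pf (s m)).1 hxm]
        exact getVert_one_append _ _ hxv
      have hgn : (Pf (s n)).1.getVert 1 = ((Pf (s n)).1.takeUntil x hxn).getVert 1 := by
        conv_lhs => rw [← SimpleGraph.Walk.take_spec (Pf (s n)).1 hxn]
        exact getVert_one_append _ _ hxv
      have hceq : cf (s m) = cf (s n) := by
        show (Pf (s m)).1.getVert 1 = (Pf (s n)).1.getVert 1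
        rw [hgm, hgn, hpq]
      rcases lt_or_gt_of_ne hmn with h | h
      · exact hcdist m n h hceq
      · exact hcdist n m h hceq.symm
    · have hlen : (fun n => ((Pf (s n)).1 : T.Walk v₀ (s n)).length) =
          fun n => T.dist v₀ (s n) := funext fun n => (Pf (s n)).2.2
      rw [hlen]
      exact hmono
  · -- negative case: build a ray, contradiction
    exfalso
    apply hnopath
    push_neg at hH
    have hH' : ∀ v, (∀ k : ℕ, ∃ w, T.dist u w = T.dist u v + T.dist v w ∧ k ≤ T.dist v w) →
        ∃ c, T.Adj v c ∧ T.dist u c = T.dist u v + 1 ∧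
          ∀ k : ℕ, ∃ w, T.dist u w = T.dist u c + T.dist c w ∧ k ≤ T.dist c w := by
      intro v hv
      obtain ⟨c, hc1, hc2, hc3⟩ := hH v hv
      exact ⟨c, hc1, hc2, hc3⟩
    choose g hg1 hg2 hg3 using hH'
    let f : {p : V // ∀ k : ℕ, ∃ w, T.dist u w = T.dist u p + T.dist p w ∧ k ≤ T.dist p w} →
        {p : V // ∀ k : ℕ, ∃ w, T.dist u w = T.dist u p + T.dist p w ∧ k ≤ T.dist p w} :=
      fun p => ⟨g p.1 p.2, hg3 p.1 p.2⟩
    let x : ℕ → {p : V // ∀ k : ℕ, ∃ w, T.dist u w = T.dist u p + T.dist p w ∧ k ≤ T.dist p w} :=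
      fun n => f^[n] ⟨u, hu⟩
    have hxs : ∀ n, x (n + 1) = f (x n) := fun n => Function.iterate_succ_apply' f n _
    have hadj : ∀ n, T.Adj ((x n).1) ((x (n + 1)).1) := by
      intro n
      rw [hxs n]
      exact hg1 (x n).1 (x n).2
    have hdist : ∀ n, T.dist u ((x n).1) = n := by
      intro n
      induction n with
      | zero => simp [x, SimpleGraph.dist_self]
      | succ n ih =>
        rw [hxs n]
        show T.dist u (g (x n).1 (x n).2) = n + 1
        rw [hg2 (x n).1 (x n).2, ih]
    refine ⟨fun n => (x n).1, ?_, hadj⟩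
    intro a b hab
    have : T.dist u ((x a).1) = T.dist u ((x b).1) := congrArg (T.dist u) hab
    rw [hdist a, hdist b] at this
    exact this
end

section
/- For every r ∈ ℕ there is an r-coloring of the edges of K_{ℕ,ℕ} in which every monochromatic path has upper density at most 1/r. -/
open Filter

open scoped Classical in
noncomputable def upperDensity (S : Set ℕ) : ℝ :=
  Filter.limsup (fun t : ℕ => (((Finset.range t).filter (fun n => n ∈ S)).card : ℝ) / t)
    Filter.atTop

/-- `S` is the vertex set of a (possibly finite, one-way infinite, or two-way infinite)
path of color `i` in the `r`-colored complete bipartite graph `K_{ℕ,ℕ}` (parts: evens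
and odds): the vertices of the path are indexed injectively by an interval of `ℤ`,
and consecutive vertices are joined by edges of `K_{ℕ,ℕ}` of color `i`. -/
def IsMonoPath (r : ℕ) (c : ℕ → ℕ → Fin r) (i : Fin r) (S : Set ℕ) : Prop :=
  ∃ (I : Set ℤ) (f : ℤ → ℕ), I.OrdConnected ∧ Set.InjOn f I ∧ S = f '' I ∧
    ∀ k : ℤ, k ∈ I → k + 1 ∈ I →
      (f k) % 2 ≠ (f (k + 1)) % 2 ∧ c (f k) (f (k + 1)) = i

/-
Split each side of `K_{ℕ,ℕ}` into `r` pieces according to `(n / 2) mod r`, and colour the edge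
between odd `u` and even `v` by the difference of their pieces. Along a path of colour `i`, an odd
vertex in piece `j` is only ever followed by even vertices in piece `j - i` and vice versa, so the
whole path lies in two residue classes mod `2r`, a set of density `1 / r`.
-/

open Finset

lemma card_filter_range_modEq_le {m : ℕ} (hm : 0 < m) (t v : ℕ) :
    #{n ∈ range t | n ≡ v [MOD m]} ≤ t / m + 1 := by
  rw [← Nat.count_eq_card_filter_range, Nat.count_modEq_card _ hm]
  split_ifs <;> omega

lemma card_filter_range_le_of_mod_mem {m : ℕ} (hm : 0 < m) {S : Set ℕ} {R : Finset ℕ}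
    [DecidablePred (· ∈ S)] (hS : ∀ n ∈ S, n % m ∈ R) (t : ℕ) :
    #{n ∈ range t | n ∈ S} ≤ #R * (t / m + 1) := by
  calc #{n ∈ range t | n ∈ S}
      ≤ #(R.biUnion fun e => {n ∈ range t | n ≡ e [MOD m]}) := by
        refine card_le_card fun n hn => ?_
        rw [mem_filter] at hn
        exact mem_biUnion.2 ⟨n % m, hS n hn.2, mem_filter.2 ⟨hn.1, (Nat.mod_mod n m).symm⟩⟩
    _ ≤ ∑ e ∈ R, #{n ∈ range t | n ≡ e [MOD m]} := card_biUnion_le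
    _ ≤ #R * (t / m + 1) :=
        sum_le_card_nsmul _ _ _ fun e _ => card_filter_range_modEq_le hm t e

open scoped Classical in
lemma upperDensity_le_of_card_le {S : Set ℕ} (a b : ℝ)
    (h : ∀ t : ℕ, (#{n ∈ range t | n ∈ S} : ℝ) ≤ a * t + b) : upperDensity S ≤ a := by
  have hlim : Tendsto (fun t : ℕ => a + b / t) atTop (nhds a) := by
    simpa using tendsto_const_nhds.add (tendsto_const_div_atTop_nhds_zero_nat b)
  have hle : ∀ᶠ t : ℕ in atTop, (#{n ∈ range t | n ∈ S} : ℝ) / t ≤ a + b / t := by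
    filter_upwards [eventually_gt_atTop 0] with t ht
    have ht' : (0 : ℝ) < t := by exact_mod_cast ht
    rw [div_le_iff₀ ht', add_mul, div_mul_cancel₀ _ ht'.ne']
    exact h t
  unfold upperDensity
  refine (limsup_le_limsup hle ?_ hlim.isBoundedUnder_le).trans_eq hlim.limsup_eq
  exact (isBoundedUnder_of ⟨0, fun t => by positivity⟩).isCoboundedUnder_le

theorem upperDensity_le_of_mod_mem {m : ℕ} (hm : 0 < m) {S : Set ℕ} {R : Finset ℕ}
    (hS : ∀ n ∈ S, n % m ∈ R) : upperDensity S ≤ #R / m := by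
  classical
  refine upperDensity_le_of_card_le _ #R fun t => ?_
  calc (#{n ∈ range t | n ∈ S} : ℝ) ≤ #R * ((t / m : ℕ) + 1 : ℝ) := by
        exact_mod_cast card_filter_range_le_of_mod_mem hm hS t
    _ ≤ #R * (t / m + 1) := by gcongr; exact Nat.cast_div_le
    _ = #R / m * t + #R := by ring

theorem Set.OrdConnected.apply_eq_apply_of_add_one {β : Type*} {I : Set ℤ} (hI : I.OrdConnected)
    {g : ℤ → β} (hg : ∀ k ∈ I, k + 1 ∈ I → g k = g (k + 1)) {k l : ℤ} (hk : k ∈ I) (hl : l ∈ I) :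
    g k = g l := by
  wlog hkl : k ≤ l generalizing k l
  · exact (this hl hk (le_of_not_ge hkl)).symm
  induction l, hkl using Int.leInduction with
  | base => rfl
  | succ l hkl ih =>
    have hl' : l ∈ I := hI.out hk hl ⟨hkl, by omega⟩
    exact (ih hl').trans (hg l hl' hl)

theorem IsMonoPath.exists_forall_eq {r : ℕ} {c : ℕ → ℕ → Fin r} {i : Fin r} {S : Set ℕ}
    {β : Type*} [Nonempty β] (φ : ℕ → β) (hφ : ∀ u v, u % 2 ≠ v % 2 → c u v = i → φ u = φ v)
    (hS : IsMonoPath r c i S) : ∃ b, ∀ n ∈ S, φ n = b := by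
  obtain ⟨I, f, hI, -, rfl, hedge⟩ := hS
  rcases I.eq_empty_or_nonempty with rfl | ⟨k₀, hk₀⟩
  · exact ⟨Classical.arbitrary β, by simp⟩
  refine ⟨φ (f k₀), ?_⟩
  rintro _ ⟨k, hk, rfl⟩
  refine hI.apply_eq_apply_of_add_one (g := φ ∘ f) (fun k hk hk' => ?_) hk hk₀
  exact hφ _ _ (hedge k hk hk').1 (hedge k hk hk').2

section PieceColoring

variable (r : ℕ) [NeZero r]

def piece (n : ℕ) : Fin r := Fin.ofNat r (n / 2)

def signedPiece (n : ℕ) : Fin r := if n % 2 = 1 then piece r n else -piece r n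

/-- On an edge between an odd `u` and an even `v` this is `piece r u - piece r v`, the colouring
of the construction; writing it as a sum makes it symmetric. -/
def pieceColoring (u v : ℕ) : Fin r := signedPiece r u + signedPiece r v

/-- The piece of the odd side that `n` lies in or is joined to by edges of colour `i`: it is
constant along every path of colour `i`. -/
def oddPartnerPiece (i : Fin r) (n : ℕ) : Fin r := if n % 2 = 1 then piece r n else piece r n + i

variable {r}

theorem oddPartnerPiece_eq_of_pieceColoring_eq {i : Fin r} {u v : ℕ} (huv : u % 2 ≠ v % 2)
    (h : pieceColoring r u v = i) : oddPartnerPiece r i u = oddPartnerPiece r i v := by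
  unfold pieceColoring signedPiece at h
  unfold oddPartnerPiece
  rcases Nat.mod_two_eq_zero_or_one u with hu | hu <;>
    rcases Nat.mod_two_eq_zero_or_one v with hv | hv <;> simp [hu, hv] at huv h ⊢ <;>
    · subst h; abel

theorem mod_two_mul_mem_of_oddPartnerPiece_eq {i a : Fin r} {n : ℕ}
    (h : oddPartnerPiece r i n = a) :
    n % (2 * r) ∈ ({2 * a.val + 1, 2 * (a - i).val} : Finset ℕ) := by
  have hpiece : (piece r n).val = n / 2 % r := Fin.val_ofNat _ _
  rw [Nat.mod_mul, mem_insert, mem_singleton, ← hpiece]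
  unfold oddPartnerPiece at h
  rcases Nat.mod_two_eq_zero_or_one n with hn | hn <;> simp only [hn, if_pos, zero_ne_one] at h ⊢
  · simp [eq_sub_of_add_eq h]
  · simp [h, add_comm]

end PieceColoring

theorem stmt_14 (r : ℕ) (hr : 0 < r) :
    ∃ c : ℕ → ℕ → Fin r,
      (∀ u v : ℕ, c u v = c v u) ∧
      ∀ (i : Fin r) (S : Set ℕ), IsMonoPath r c i S → upperDensity S ≤ 1 / r := by
  have : NeZero r := ⟨hr.ne'⟩
  refine ⟨pieceColoring r, fun u v => add_comm _ _, fun i S hS => ?_⟩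
  obtain ⟨a, ha⟩ := hS.exists_forall_eq _ fun u v => oddPartnerPiece_eq_of_pieceColoring_eq
  calc upperDensity S ≤ (#{2 * a.val + 1, 2 * (a - i).val} : ℝ) / (2 * r : ℕ) :=
        upperDensity_le_of_mod_mem (by omega) fun n hn =>
          mod_two_mul_mem_of_oddPartnerPiece_eq (ha n hn)
    _ ≤ 2 / (2 * r : ℕ) := by gcongr; exact_mod_cast card_le_two
    _ = 1 / r := by push_cast; field_simp
end

section
/- Let G be a graph that is weakly expanding. Then there exists a 2-coloring of the edges of K_ℕ such that every monochromatic copy of G has lower density 0. -/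
open Filter

open scoped Classical in
noncomputable def lowerDensity (S : Set ℕ) : ℝ :=
  Filter.liminf (fun t : ℕ => (((Finset.range t).filter (fun n => n ∈ S)).card : ℝ) / t)
    Filter.atTop

/-- `G` is weakly expanding: for every `k` there is `ℓ` such that every independent
set `A` with `|A| ≥ ℓ` satisfies `|N(A)| > k`. -/
def WeaklyExpanding {V : Type*} (G : SimpleGraph V) : Prop :=
  ∀ k : ℕ, ∃ ℓ : ℕ, ∀ A : Set V,
    (∀ a ∈ A, ∀ b ∈ A, ¬ G.Adj a b) → (ℓ : ℕ∞) ≤ A.encard →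
      (k : ℕ∞) < (⋃ a ∈ A, G.neighborSet a).encard

/-- The rapidly growing interval endpoints. -/
def bSeq (L : ℕ → ℕ) : ℕ → ℕ
  | 0 => 0
  | k+1 => (k+1) * (bSeq L k + L (bSeq L k) + 1)

lemma bSeq_ge (L : ℕ → ℕ) : ∀ k, k ≤ bSeq L k := by
  intro k
  induction k with
  | zero => simp [bSeq]
  | succ n ih =>
    have : (n+1) * 1 ≤ (n+1) * (bSeq L n + L (bSeq L n) + 1) :=
      Nat.mul_le_mul_left _ (by omega)
    simpa [bSeq] using this

lemma bSeq_strictMono (L : ℕ → ℕ) : StrictMono (bSeq L) := by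
  apply strictMono_nat_of_lt_succ
  intro k
  have : 1 * (bSeq L k + L (bSeq L k) + 1) ≤ (k+1) * (bSeq L k + L (bSeq L k) + 1) :=
    Nat.mul_le_mul_right _ (by omega)
  simp only [bSeq]
  omega

/-- The index of the interval containing `n`. -/
def idxFun (L : ℕ → ℕ) (n : ℕ) : ℕ := Nat.findGreatest (fun k => bSeq L k ≤ n) n

lemma idxFun_le (L : ℕ → ℕ) (n : ℕ) : bSeq L (idxFun L n) ≤ n :=
  Nat.findGreatest_spec (P := fun k => bSeq L k ≤ n) (Nat.zero_le n) (Nat.zero_le n)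

lemma idxFun_lt (L : ℕ → ℕ) (n : ℕ) : n < bSeq L (idxFun L n + 1) := by
  by_cases h : idxFun L n + 1 ≤ n
  · have h2 := Nat.findGreatest_is_greatest (P := fun k => bSeq L k ≤ n)
      (Nat.lt_succ_self (idxFun L n)) h
    simp only [Nat.succ_eq_add_one] at h2
    omega
  · have := bSeq_ge L (idxFun L n + 1)
    omega

lemma idxFun_eq (L : ℕ → ℕ) {k n : ℕ} (h1 : bSeq L k ≤ n) (h2 : n < bSeq L (k+1)) :
    idxFun L n = k := by
  rcases lt_trichotomy (idxFun L n) k with h | h | h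
  · have h3 : bSeq L (idxFun L n + 1) ≤ bSeq L k := (bSeq_strictMono L).monotone (by omega)
    have := idxFun_lt L n
    omega
  · exact h
  · have h3 : bSeq L (k+1) ≤ bSeq L (idxFun L n) := (bSeq_strictMono L).monotone (by omega)
    have := idxFun_le L n
    omega

lemma aux_liminf (u : ℕ → ℝ) (h0 : ∀ t, 0 ≤ u t) (h1 : ∀ t, u t ≤ 1)
    (h : ∀ ε : ℝ, 0 < ε → ∀ N : ℕ, ∃ t, N ≤ t ∧ u t ≤ ε) :
    Filter.liminf u Filter.atTop = 0 := by
  have hbdd : Filter.IsBoundedUnder (· ≥ ·) Filter.atTop u :=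
    ⟨0, Filter.eventually_map.2 (Filter.Eventually.of_forall h0)⟩
  have hbdd' : Filter.IsBoundedUnder (· ≤ ·) Filter.atTop u :=
    ⟨1, Filter.eventually_map.2 (Filter.Eventually.of_forall h1)⟩
  refine le_antisymm ?_ ?_
  · refine le_of_forall_pos_le_add ?_
    intro ε hε
    rw [zero_add]
    refine Filter.liminf_le_of_frequently_le ?_ hbdd
    rw [Filter.frequently_atTop]
    intro N
    obtain ⟨t, ht, hle⟩ := h ε hε N
    exact ⟨t, ht, hle⟩
  · exact Filter.le_liminf_of_le hbdd'.isCoboundedUnder_ge (Filter.Eventually.of_forall h0)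

theorem stmt_15 {V : Type*} [Countable V] [Infinite V] (G : SimpleGraph V)
    (hG : WeaklyExpanding G) :
    ∃ c : ℕ → ℕ → Bool,
      (∀ u v : ℕ, c u v = c v u) ∧
      ∀ (col : Bool) (f : V → ℕ), Function.Injective f →
        (∀ u v : V, G.Adj u v → c (f u) (f v) = col) →
        lowerDensity (Set.range f) = 0 := by
  classical
  choose L hL using hG
  refine ⟨fun u v => decide (idxFun L (min u v) % 2 = 0), fun u v => by
    show decide (idxFun L (min u v) % 2 = 0) = decide (idxFun L (min v u) % 2 = 0)
    rw [min_comm], ?_⟩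
  intro col f hinj hmono
  -- key counting lemma: intervals with the "wrong" parity contain few image points
  have key : ∀ k : ℕ, decide (k % 2 = 0) = !col →
      ((Finset.range (bSeq L (k+1))).filter (fun n => n ∈ Set.range f)).card
        ≤ bSeq L k + L (bSeq L k) := by
    intro k hk
    set A : Set V := {v : V | bSeq L k ≤ f v ∧ f v < bSeq L (k+1)} with hA
    have hind : ∀ a ∈ A, ∀ a' ∈ A, ¬ G.Adj a a' := by
      intro a ha a' ha' hadj
      have hc : decide (idxFun L (min (f a) (f a')) % 2 = 0) = col := hmono a a' hadj
      have hm1 : bSeq L k ≤ min (f a) (f a') := le_min ha.1 ha'.1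
      have hm2 : min (f a) (f a') < bSeq L (k+1) := lt_of_le_of_lt (min_le_left _ _) ha.2
      rw [idxFun_eq L hm1 hm2, hk] at hc
      simp at hc
    have hN : ∀ x ∈ ⋃ a ∈ A, G.neighborSet a, f x < bSeq L k := by
      intro x hx
      simp only [Set.mem_iUnion, SimpleGraph.mem_neighborSet] at hx
      obtain ⟨a, ha, hadj⟩ := hx
      by_contra h
      push_neg at h
      have hc : decide (idxFun L (min (f a) (f x)) % 2 = 0) = col := hmono a x hadj
      have hm1 : bSeq L k ≤ min (f a) (f x) := le_min ha.1 h
      have hm2 : min (f a) (f x) < bSeq L (k+1) := lt_of_le_of_lt (min_le_left _ _) ha.2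
      rw [idxFun_eq L hm1 hm2, hk] at hc
      simp at hc
    have hNcard : (⋃ a ∈ A, G.neighborSet a).encard ≤ (bSeq L k : ℕ∞) := by
      calc (⋃ a ∈ A, G.neighborSet a).encard
          = (f '' ⋃ a ∈ A, G.neighborSet a).encard := (Set.InjOn.encard_image hinj.injOn).symm
        _ ≤ (↑(Finset.range (bSeq L k)) : Set ℕ).encard := by
            apply Set.encard_mono
            rintro _ ⟨x, hx, rfl⟩
            simp only [Finset.coe_range, Set.mem_Iio]
            exact hN x hx
        _ = (bSeq L k : ℕ∞) := by
            rw [Set.encard_coe_eq_coe_finsetCard, Finset.card_range]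
    have hAlt : A.encard < (L (bSeq L k) : ℕ∞) := by
      by_contra h
      push_neg at h
      exact absurd (hL (bSeq L k) A hind h) (not_lt.2 hNcard)
    have hAfin : A.Finite := Set.encard_lt_top_iff.mp (hAlt.trans_le le_top)
    have hAcard : hAfin.toFinset.card ≤ L (bSeq L k) := by
      have h2 := hAfin.encard_eq_coe_toFinset_card
      rw [h2] at hAlt
      exact_mod_cast hAlt.le
    have hsub : (Finset.range (bSeq L (k+1))).filter (fun n => n ∈ Set.range f)
        ⊆ Finset.range (bSeq L k) ∪ hAfin.toFinset.image f := by
      intro n hn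
      simp only [Finset.mem_filter, Finset.mem_range, Set.mem_range] at hn
      obtain ⟨hnt, v, rfl⟩ := hn
      rcases lt_or_ge (f v) (bSeq L k) with h | h
      · exact Finset.mem_union_left _ (Finset.mem_range.mpr h)
      · refine Finset.mem_union_right _ (Finset.mem_image.mpr ⟨v, ?_, rfl⟩)
        rw [Set.Finite.mem_toFinset]
        exact ⟨h, hnt⟩
    calc ((Finset.range (bSeq L (k+1))).filter (fun n => n ∈ Set.range f)).card
        ≤ (Finset.range (bSeq L k) ∪ hAfin.toFinset.image f).card := Finset.card_le_card hsub
      _ ≤ (Finset.range (bSeq L k)).card + (hAfin.toFinset.image f).card :=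
          Finset.card_union_le _ _
      _ ≤ bSeq L k + L (bSeq L k) := by
          rw [Finset.card_range]
          exact Nat.add_le_add_left (le_trans (Finset.card_image_le) hAcard) _
  -- density bound at the end of a wrong-parity interval
  have hd : ∀ k : ℕ, decide (k % 2 = 0) = !col →
      ((((Finset.range (bSeq L (k+1))).filter (fun n => n ∈ Set.range f)).card : ℝ)
        / (bSeq L (k+1) : ℝ)) ≤ 1 / ((k : ℝ) + 1) := by
    intro k hk
    have h1 : ((Finset.range (bSeq L (k+1))).filter (fun n => n ∈ Set.range f)).card * (k+1)
        ≤ bSeq L (k+1) := by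
      calc ((Finset.range (bSeq L (k+1))).filter (fun n => n ∈ Set.range f)).card * (k+1)
          ≤ (bSeq L k + L (bSeq L k)) * (k+1) := Nat.mul_le_mul_right _ (key k hk)
        _ ≤ (bSeq L k + L (bSeq L k) + 1) * (k+1) := Nat.mul_le_mul_right _ (by omega)
        _ = (k+1) * (bSeq L k + L (bSeq L k) + 1) := mul_comm _ _
        _ = bSeq L (k+1) := rfl
    have htpos : 0 < bSeq L (k+1) := by
      have := bSeq_ge L (k+1); omega
    have ht : (0:ℝ) < (bSeq L (k+1) : ℝ) := by exact_mod_cast htpos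
    rw [div_le_div_iff₀ ht (by positivity)]
    rw [one_mul]
    calc ((((Finset.range (bSeq L (k+1))).filter (fun n => n ∈ Set.range f)).card : ℝ))
          * ((k : ℝ) + 1)
        = ((((Finset.range (bSeq L (k+1))).filter (fun n => n ∈ Set.range f)).card * (k+1) : ℕ) : ℝ)
          := by push_cast; ring
      _ ≤ (bSeq L (k+1) : ℝ) := by exact_mod_cast h1
  unfold lowerDensity
  refine aux_liminf _ (fun t => div_nonneg (by positivity) (by positivity)) (fun t => ?_) ?_
  · exact div_le_one_of_le₀
      (by exact_mod_cast (Finset.card_filter_le _ _).trans (Finset.card_range t).le)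
      (by positivity)
  · intro ε hε N
    set j := max N (Nat.ceil (1/ε)) with hj
    set k := 2*j + (if col then 1 else 0) with hk'
    have hk : decide (k % 2 = 0) = !col := by
      have hkval : k = 2*j + (if col then 1 else 0) := hk'
      cases col
      · have h2 : k % 2 = 0 := by simp at hkval; omega
        simp [h2]
      · have h2 : k % 2 = 1 := by simp at hkval; omega
        simp [h2]
    have hjk : j ≤ k := by
      have : j ≤ 2*j := by omega
      exact le_trans this (Nat.le_add_right _ _)
    refine ⟨bSeq L (k+1), ?_, ?_⟩
    · have h1 := bSeq_ge L (k+1)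
      have h2 : N ≤ j := le_max_left _ _
      omega
    · have hceil : 1/ε ≤ (j:ℝ) := le_trans (Nat.le_ceil _)
        (by exact_mod_cast le_max_right N (Nat.ceil (1/ε)))
      have hk1 : 1/ε ≤ (k:ℝ) + 1 := by
        refine le_trans hceil ?_
        have : (j:ℝ) ≤ (k:ℝ) := by exact_mod_cast hjk
        linarith
      have hlast : 1 / ((k : ℝ) + 1) ≤ ε := by
        rw [div_le_iff₀ (by positivity)]
        have := (div_le_iff₀ hε).mp hk1
        linarith
      exact le_trans (hd k hk) hlast
end

section
/- Let G be a graph with a finite dominating set. Then there exists a 2-coloring of the edges of K_ℕ such that every monochromatic copy of G has lower density 0. -/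
open Filter

/-- The interval endpoints: `aSeq i = (i+1)!`. -/
def aSeq (i : ℕ) : ℕ := Nat.factorial (i + 1)

lemma aSeq_pos (i : ℕ) : 0 < aSeq i := Nat.factorial_pos _

lemma aSeq_succ (i : ℕ) : aSeq (i + 1) = (i + 2) * aSeq i := rfl

lemma aSeq_strictMono : StrictMono aSeq := by
  apply strictMono_nat_of_lt_succ
  intro i
  rw [aSeq_succ]
  have := aSeq_pos i
  nlinarith

lemma self_lt_aSeq (i : ℕ) : i < aSeq i :=
  lt_of_lt_of_le (Nat.lt_succ_self i) (Nat.self_le_factorial _)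

/-- Index of the interval containing `n`. -/
def idx (n : ℕ) : ℕ := Nat.findGreatest (fun i => aSeq i ≤ n) n

lemma idx_eq {i n : ℕ} (h1 : aSeq i ≤ n) (h2 : n < aSeq (i + 1)) : idx n = i := by
  rw [idx, Nat.findGreatest_eq_iff]
  refine ⟨le_trans (self_lt_aSeq i).le h1, fun _ => h1, fun m hm _ hP => ?_⟩
  exact absurd hP (not_le.mpr (lt_of_lt_of_le h2 (aSeq_strictMono.monotone hm)))

open scoped Classical in
lemma density_zero {S : Set ℕ} {M : ℕ} {col : Bool}
    (key : ∀ n ∈ S, M < n → (decide (idx n % 2 = 1) : Bool) = col) :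
    lowerDensity S = 0 := by
  set u : ℕ → ℝ := fun t : ℕ =>
    (((Finset.range t).filter (fun n => n ∈ S)).card : ℝ) / t with hu
  have hu0 : ∀ t, 0 ≤ u t := fun t => div_nonneg (by positivity) (by positivity)
  have hu1 : ∀ t, u t ≤ 1 := by
    intro t
    apply div_le_one_of_le₀
    · exact_mod_cast (Finset.card_filter_le _ _).trans (by simp)
    · positivity
  have hbdd : IsBoundedUnder (· ≥ ·) atTop u := isBoundedUnder_of ⟨0, fun t => hu0 t⟩
  have hbdd' : IsBoundedUnder (· ≤ ·) atTop u := isBoundedUnder_of ⟨1, fun t => hu1 t⟩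
  -- counting bound
  have count : ∀ i : ℕ, (decide (i % 2 = 1) : Bool) ≠ col →
      ((Finset.range (aSeq (i + 1))).filter (fun n => n ∈ S)).card ≤ M + 1 + aSeq i := by
    intro i hi
    have hsub : ((Finset.range (aSeq (i + 1))).filter (fun n => n ∈ S)) ⊆
        Finset.range (M + 1) ∪ Finset.range (aSeq i) := by
      intro n hn
      simp only [Finset.mem_filter, Finset.mem_range] at hn
      obtain ⟨hlt, hnS⟩ := hn
      simp only [Finset.mem_union, Finset.mem_range]
      by_cases hM : n ≤ M
      · exact Or.inl (by omega)
      · right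
        by_contra hge
        push_neg at hge
        have hidx : idx n = i := idx_eq hge hlt
        have hk := key n hnS (by omega)
        rw [hidx] at hk
        exact hi hk
    calc ((Finset.range (aSeq (i + 1))).filter (fun n => n ∈ S)).card
        ≤ (Finset.range (M + 1) ∪ Finset.range (aSeq i)).card := Finset.card_le_card hsub
      _ ≤ (Finset.range (M + 1)).card + (Finset.range (aSeq i)).card := Finset.card_union_le _ _
      _ = M + 1 + aSeq i := by simp
  have hle : liminf u atTop ≤ 0 := by
    apply le_of_forall_pos_le_add
    intro ε hε
    simp only [zero_add]
    apply liminf_le_of_frequently_le _ hbdd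
    rw [frequently_atTop]
    intro N
    set K : ℕ := max N ⌈(M + 2 : ℝ) / ε⌉₊ with hK
    set i : ℕ := 2 * K + (if col then 0 else 1) with hi
    refine ⟨aSeq (i + 1), ?_, ?_⟩
    · have h1 : N ≤ K := le_max_left _ _
      have h2 : K ≤ i := by omega
      have := self_lt_aSeq (i + 1)
      omega
    · have hpar : (decide (i % 2 = 1) : Bool) ≠ col := by
        cases col <;> simp [hi, Nat.add_mul_mod_self_left] <;> omega
      have hc := count i hpar
      have hεK : (M + 2 : ℝ) ≤ ε * (i + 2) := by
        have h1 : ((M + 2 : ℝ) / ε) ≤ (⌈(M + 2 : ℝ) / ε⌉₊ : ℝ) := Nat.le_ceil _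
        have h2 : (⌈(M + 2 : ℝ) / ε⌉₊ : ℝ) ≤ (i + 2 : ℝ) := by
          have : ⌈(M + 2 : ℝ) / ε⌉₊ ≤ i + 2 := by
            have := le_max_right N ⌈(M + 2 : ℝ) / ε⌉₊
            omega
          exact_mod_cast this
        have := (div_le_iff₀ hε).mp (h1.trans h2)
        linarith
      have hA1 : (1 : ℝ) ≤ (aSeq i : ℝ) := by exact_mod_cast aSeq_pos i
      have hApos : (0 : ℝ) < (aSeq (i + 1) : ℝ) := by exact_mod_cast aSeq_pos (i + 1)
      have hnum : (((Finset.range (aSeq (i + 1))).filter (fun n => n ∈ S)).card : ℝ)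
          ≤ (M + 1 : ℝ) + (aSeq i : ℝ) := by exact_mod_cast hc
      have hstep : u (aSeq (i + 1)) ≤ ((M + 1 : ℝ) + (aSeq i : ℝ)) / (aSeq (i + 1) : ℝ) := by
        simp only [hu]
        gcongr
      refine hstep.trans ?_
      rw [div_le_iff₀ hApos]
      have hsuccR : (aSeq (i + 1) : ℝ) = ((i : ℝ) + 2) * (aSeq i : ℝ) := by
        rw [aSeq_succ]; push_cast; ring
      rw [hsuccR]
      nlinarith [mul_le_mul_of_nonneg_right hεK (le_trans zero_le_one hA1)]
  have hge : (0 : ℝ) ≤ liminf u atTop := by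
    apply le_liminf_of_le (hbdd'.isCoboundedUnder_ge)
    exact Eventually.of_forall hu0
  rw [lowerDensity]
  linarith

theorem stmt_16 {V : Type*} [Countable V] [Infinite V] (G : SimpleGraph V)
    (hdom : ∃ D : Set V, D.Finite ∧ ∀ v ∉ D, ∃ d ∈ D, G.Adj v d) :
    ∃ c : ℕ → ℕ → Bool,
      (∀ u v : ℕ, c u v = c v u) ∧
      ∀ (col : Bool) (f : V → ℕ), Function.Injective f →
        (∀ u v : V, G.Adj u v → c (f u) (f v) = col) →
        lowerDensity (Set.range f) = 0 := by
  classical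
  refine ⟨fun u v => decide (idx (if u ≤ v then v else u) % 2 = 1), fun u v => ?_, ?_⟩
  · have h : (if u ≤ v then v else u) = (if v ≤ u then u else v) := by split_ifs <;> omega
    simp only [h]
  intro col f hf hmono
  obtain ⟨D, hDfin, hDdom⟩ := hdom
  set M : ℕ := (hDfin.toFinset.image f).sup id with hM
  apply density_zero (M := M) (col := col)
  rintro n ⟨v, rfl⟩ hn
  have hvD : v ∉ D := by
    intro hv
    have : f v ≤ M :=
      Finset.le_sup (f := id) (Finset.mem_image_of_mem f (hDfin.mem_toFinset.mpr hv))
    omega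
  obtain ⟨d, hd, hadj⟩ := hDdom v hvD
  have hfd : f d ≤ M :=
    Finset.le_sup (f := id) (Finset.mem_image_of_mem f (hDfin.mem_toFinset.mpr hd))
  have hcol := hmono v d hadj
  simp only [if_neg (show ¬ f v ≤ f d by omega)] at hcol
  exact hcol
end

section
/- For every k ∈ ℕ there exists a 2-coloring of the edges of K_ℕ such that every monochromatic k-wise self-intersecting set has upper density at most 1/(2k). -/
open Filter

/-- In the 2-coloring `c` of the complete graph on `ℕ`, `X` is `k`-wise
self-intersecting in color `col`. -/
def SelfIntersecting (c : ℕ → ℕ → Bool) (col : Bool) (k : ℕ) (X : Set ℕ) : Prop :=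
  ∀ S : Finset ℕ, ↑S ⊆ X → S.card ≤ k →
    (X ∩ ⋂ v ∈ S, {w : ℕ | w ≠ v ∧ c v w = col}).Infinite

namespace Stmt17Aux

open scoped Classical

/-- the label matrix -/
def M (k : ℕ) (a b : ℕ) : Bool := if a = b then decide (a < k) else !decide (b < k)

/-- the coloring -/
def myc (k : ℕ) (u v : ℕ) : Bool := M k (min u v % (2 * k)) (max u v % (2 * k))

lemma myc_symm (k u v : ℕ) : myc k u v = myc k v u := by
  simp [myc, min_comm, max_comm]

/-- combinatorial killer lemma -/
lemma killer (k : ℕ) (col : Bool) (L : Finset ℕ)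
    (hL : ∀ r ∈ L, r < 2 * k) (h2 : 2 ≤ L.card) :
    ∃ J : Finset ℕ, J ⊆ L ∧ J.card ≤ k ∧
      ∀ i ∈ L, ∃ l ∈ J, M k l i ≠ col := by
  classical
  obtain ⟨a, ha, b, hb, hab⟩ := Finset.one_lt_card.mp (by omega : 1 < L.card)
  cases col with
  | true =>
    by_cases hH : (L.filter (fun r => ¬ r < k)).Nonempty
    · refine ⟨L.filter (fun r => ¬ r < k), Finset.filter_subset _ _, ?_, ?_⟩
      · calc (L.filter fun r => ¬ r < k).card ≤ (Finset.Ico k (2*k)).card := by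
              apply Finset.card_le_card
              intro r hr
              simp only [Finset.mem_filter] at hr
              exact Finset.mem_Ico.mpr ⟨by omega, hL r hr.1⟩
          _ ≤ k := by rw [Nat.card_Ico]; omega
      · intro i hi
        by_cases hik : i < k
        · obtain ⟨l, hl⟩ := hH
          refine ⟨l, hl, ?_⟩
          have hlk : ¬ l < k := (Finset.mem_filter.mp hl).2
          have hli : l ≠ i := by omega
          simp [M, hli, hik]
        · exact ⟨i, Finset.mem_filter.mpr ⟨hi, hik⟩, by simp [M, hik]⟩
    · have hall : ∀ r ∈ L, r < k := by
        intro r hr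
        by_contra h
        exact hH ⟨r, Finset.mem_filter.mpr ⟨hr, h⟩⟩
      have hk2 : 2 ≤ k := by
        have hsub : L ⊆ Finset.range k := fun r hr => Finset.mem_range.mpr (hall r hr)
        have := Finset.card_le_card hsub
        simp only [Finset.card_range] at this
        omega
      refine ⟨{a, b}, ?_, ?_, ?_⟩
      · intro x hx
        rcases Finset.mem_insert.mp hx with h | h
        · exact h ▸ ha
        · exact (Finset.mem_singleton.mp h) ▸ hb
      · have : ({a, b} : Finset ℕ).card ≤ 2 := Finset.card_insert_le a {b} |>.trans (by simp)
        omega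
      · intro i hi
        have hik : i < k := hall i hi
        by_cases hia : i = a
        · refine ⟨b, by simp, ?_⟩
          have : b ≠ i := by omega
          simp [M, this, hik]
        · refine ⟨a, by simp, ?_⟩
          have : a ≠ i := fun h => hia h.symm
          simp [M, this, hik]
  | false =>
    by_cases hH : (L.filter (fun r => r < k)).Nonempty
    · refine ⟨L.filter (fun r => r < k), Finset.filter_subset _ _, ?_, ?_⟩
      · calc (L.filter fun r => r < k).card ≤ (Finset.range k).card := by
              apply Finset.card_le_card
              intro r hr
              simp only [Finset.mem_filter] at hr
              exact Finset.mem_range.mpr hr.2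
          _ ≤ k := by simp
      · intro i hi
        by_cases hik : i < k
        · exact ⟨i, Finset.mem_filter.mpr ⟨hi, hik⟩, by simp [M, hik]⟩
        · obtain ⟨l, hl⟩ := hH
          refine ⟨l, hl, ?_⟩
          have hlk : l < k := (Finset.mem_filter.mp hl).2
          have hli : l ≠ i := by omega
          simp [M, hli, hik]
    · have hall : ∀ r ∈ L, ¬ r < k := by
        intro r hr
        by_contra h
        exact hH ⟨r, Finset.mem_filter.mpr ⟨hr, by omega⟩⟩
      have hk2 : 2 ≤ k := by
        have hsub : L ⊆ Finset.Ico k (2*k) := fun r hr =>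
          Finset.mem_Ico.mpr ⟨by have := hall r hr; omega, hL r hr⟩
        have := Finset.card_le_card hsub
        rw [Nat.card_Ico] at this
        omega
      refine ⟨{a, b}, ?_, ?_, ?_⟩
      · intro x hx
        rcases Finset.mem_insert.mp hx with h | h
        · exact h ▸ ha
        · exact (Finset.mem_singleton.mp h) ▸ hb
      · have : ({a, b} : Finset ℕ).card ≤ 2 := Finset.card_insert_le a {b} |>.trans (by simp)
        omega
      · intro i hi
        have hik : ¬ i < k := hall i hi
        by_cases hia : i = a
        · refine ⟨b, by simp, ?_⟩
          have : b ≠ i := by omega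
          simp [M, this, hik]
        · refine ⟨a, by simp, ?_⟩
          have : a ≠ i := fun h => hia h.symm
          simp [M, this, hik]

/-- density lemma -/
lemma density (m : ℕ) (hm : 0 < m) (r : ℕ) (D : Set ℕ) (hD : D.Finite)
    (X : Set ℕ) (hX : ∀ n ∈ X, n ∈ D ∨ n % m = r) :
    upperDensity X ≤ 1 / m := by
  classical
  set C : ℕ := hD.toFinset.card with hC
  have key : ∀ t : ℕ, ((Finset.range t).filter (fun n => n ∈ X)).card ≤ C + (t / m + 1) := by
    intro t
    have hsub : (Finset.range t).filter (fun n => n ∈ X) ⊆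
        ((Finset.range t).filter (fun n => n ∈ D)) ∪
          ((Finset.range t).filter (fun n => n % m = r)) := by
      intro n hn
      simp only [Finset.mem_filter, Finset.mem_union] at *
      rcases hX n hn.2 with h | h
      · exact Or.inl ⟨hn.1, h⟩
      · exact Or.inr ⟨hn.1, h⟩
    have h1 : ((Finset.range t).filter (fun n => n ∈ D)).card ≤ C := by
      apply Finset.card_le_card
      intro n hn
      simp only [Finset.mem_filter] at hn
      exact hD.mem_toFinset.mpr hn.2
    have h2 : ((Finset.range t).filter (fun n => n % m = r)).card ≤ t / m + 1 := by
      have hmaps : ∀ n ∈ (Finset.range t).filter (fun n => n % m = r),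
          n / m ∈ Finset.range (t / m + 1) := by
        intro n hn
        simp only [Finset.mem_filter, Finset.mem_range] at hn ⊢
        have : n / m ≤ t / m := Nat.div_le_div_right (le_of_lt hn.1)
        omega
      have hinj : Set.InjOn (fun n => n / m)
          ↑((Finset.range t).filter (fun n => n % m = r)) := by
        intro x hx y hy hxy
        simp only [Finset.mem_coe, Finset.mem_filter] at hx hy
        have hxy' : x / m = y / m := hxy
        have h1 := Nat.div_add_mod x m
        have h2 := Nat.div_add_mod y m
        rw [hxy'] at h1
        omega
      have := Finset.card_le_card_of_injOn (fun n => n / m) hmaps hinj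
      simpa using this
    calc ((Finset.range t).filter (fun n => n ∈ X)).card
        ≤ (((Finset.range t).filter (fun n => n ∈ D)) ∪
            ((Finset.range t).filter (fun n => n % m = r))).card := Finset.card_le_card hsub
      _ ≤ ((Finset.range t).filter (fun n => n ∈ D)).card +
            ((Finset.range t).filter (fun n => n % m = r)).card := Finset.card_union_le _ _
      _ ≤ C + (t / m + 1) := by omega
  have hev : (fun t : ℕ => (((Finset.range t).filter (fun n => n ∈ X)).card : ℝ) / t)
      ≤ᶠ[atTop] (fun t : ℕ => 1 / m + ((C : ℝ) + 1) / t) := by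
    filter_upwards [eventually_ge_atTop 1] with t ht
    have ht0 : (0:ℝ) < t := by exact_mod_cast ht
    have hm0 : (0:ℝ) < m := by exact_mod_cast hm
    have hcast : (((Finset.range t).filter (fun n => n ∈ X)).card : ℝ)
        ≤ (t : ℝ) / m + ((C : ℝ) + 1) := by
      have h := key t
      have h' : (((Finset.range t).filter (fun n => n ∈ X)).card : ℝ)
          ≤ (C : ℝ) + ((↑(t / m) : ℝ) + 1) := by exact_mod_cast h
      have hdiv : (↑(t / m) : ℝ) ≤ (t : ℝ) / m := Nat.cast_div_le
      linarith
    have heq : ((t : ℝ) / m + ((C : ℝ) + 1)) / t = 1 / m + ((C : ℝ) + 1) / t := by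
      field_simp
    calc (((Finset.range t).filter (fun n => n ∈ X)).card : ℝ) / t
        ≤ ((t : ℝ) / m + ((C : ℝ) + 1)) / t := by
          gcongr
      _ = 1 / m + ((C : ℝ) + 1) / t := heq
  have hg : Tendsto (fun t : ℕ => 1 / (m:ℝ) + ((C : ℝ) + 1) / t) atTop (nhds (1 / m)) := by
    have h0 : Tendsto (fun t : ℕ => ((C : ℝ) + 1) / t) atTop (nhds 0) :=
      tendsto_const_div_atTop_nhds_zero_nat _
    simpa using tendsto_const_nhds.add h0
  have := Filter.limsup_le_limsup hev ?_ ?_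
  · rw [hg.limsup_eq] at this
    exact this
  · apply Filter.IsCoboundedUnder.of_frequently_ge (a := 0)
    apply Filter.Frequently.of_forall
    intro t
    positivity
  · exact hg.isBoundedUnder_le

end Stmt17Aux

theorem stmt_17 (k : ℕ) (hk : 0 < k) :
    ∃ c : ℕ → ℕ → Bool,
      (∀ u v : ℕ, c u v = c v u) ∧
      ∀ X : Set ℕ, (∃ col : Bool, SelfIntersecting c col k X) →
        upperDensity X ≤ 1 / (2 * k) := by
  classical
  refine ⟨Stmt17Aux.myc k, fun u v => Stmt17Aux.myc_symm k u v, ?_⟩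
  rintro X ⟨col, hSI⟩
  set m := 2 * k with hm
  have hm0 : 0 < m := by omega
  set Lf := (Finset.range m).filter (fun r => (X ∩ {n | n % m = r}).Infinite) with hLf
  have hXinf : X.Infinite := by
    have := hSI ∅ (by simp) (by simp)
    simpa using this
  have hcard : Lf.card ≤ 1 := by
    by_contra hc
    push_neg at hc
    obtain ⟨J, hJL, hJk, hJkill⟩ := Stmt17Aux.killer k col Lf
      (fun r hr => Finset.mem_range.mp (Finset.mem_filter.mp hr).1) (by omega)
    set g : ℕ → ℕ := fun l =>
      if h : (X ∩ {n | n % m = l}).Infinite then h.nonempty.choose else 0 with hgdef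
    have hgX : ∀ l ∈ J, g l ∈ X ∧ g l % m = l := by
      intro l hl
      have h := (Finset.mem_filter.mp (hJL hl)).2
      simp only [hgdef, dif_pos h]
      exact ⟨h.nonempty.choose_spec.1, h.nonempty.choose_spec.2⟩
    set S := J.image g with hS
    have hSX : ↑S ⊆ X := by
      intro x hx
      simp only [hS, Finset.coe_image, Set.mem_image, Finset.mem_coe] at hx
      obtain ⟨l, hl, rfl⟩ := hx
      exact (hgX l hl).1
    have hScard : S.card ≤ k := le_trans Finset.card_image_le hJk
    have hinf := hSI S hSX hScard
    set N := S.sup id with hN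
    apply hinf
    have hfin : (X ∩ ⋂ v ∈ S, {w : ℕ | w ≠ v ∧ Stmt17Aux.myc k v w = col}) ⊆
        {n : ℕ | n ≤ N} ∪ ⋃ i ∈ ((Finset.range m).filter
          (fun i => ¬ (X ∩ {n | n % m = i}).Infinite)), (X ∩ {n | n % m = i}) := by
      rintro w ⟨hwX, hwI⟩
      by_cases hwN : w ≤ N
      · exact Or.inl hwN
      · right
        have hwm : w % m < m := Nat.mod_lt _ hm0
        refine Set.mem_biUnion (Finset.mem_filter.mpr ⟨Finset.mem_range.mpr hwm, ?_⟩) ⟨hwX, rfl⟩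
        intro hinf2
        have hiLf : w % m ∈ Lf := Finset.mem_filter.mpr ⟨Finset.mem_range.mpr hwm, hinf2⟩
        obtain ⟨l, hlJ, hlM⟩ := hJkill (w % m) hiLf
        have hv : g l ∈ S := Finset.mem_image_of_mem g hlJ
        have hw := Set.mem_iInter₂.mp hwI (g l) hv
        have hvN : g l ≤ N := Finset.le_sup (f := id) hv
        have hvw : g l < w := by omega
        have : Stmt17Aux.myc k (g l) w = col := hw.2
        rw [Stmt17Aux.myc] at this
        rw [min_eq_left (le_of_lt hvw), max_eq_right (le_of_lt hvw)] at this
        rw [(hgX l hlJ).2] at this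
        exact hlM this
    exact Set.Finite.subset (Set.Finite.union (Set.finite_le_nat N)
      (Set.Finite.biUnion (Finset.finite_toSet _)
        (fun i hi => Set.not_infinite.mp (Finset.mem_filter.mp hi).2))) hfin
  -- Now Lf.card ≤ 1
  rcases Nat.le_one_iff_eq_zero_or_eq_one.mp hcard with h0 | h1
  · exfalso
    have hLfe : Lf = ∅ := Finset.card_eq_zero.mp h0
    have hsub : X ⊆ ⋃ i ∈ Finset.range m, (X ∩ {n | n % m = i}) := by
      intro n hn
      exact Set.mem_biUnion (Finset.mem_range.mpr (Nat.mod_lt _ hm0)) ⟨hn, rfl⟩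
    have hfin : X.Finite := by
      apply Set.Finite.subset (Set.Finite.biUnion (Finset.finite_toSet _) ?_) hsub
      intro i hi
      apply Set.not_infinite.mp
      intro hinf2
      have : i ∈ Lf := Finset.mem_filter.mpr ⟨hi, hinf2⟩
      rw [hLfe] at this
      exact absurd this (Finset.notMem_empty i)
    exact hXinf hfin
  · obtain ⟨r, hr⟩ := Finset.card_eq_one.mp h1
    have hbound : upperDensity X ≤ 1 / (m : ℝ) := by
      apply Stmt17Aux.density m hm0 r
        (⋃ i ∈ ((Finset.range m).filter
          (fun i => ¬ (X ∩ {n | n % m = i}).Infinite)), (X ∩ {n | n % m = i}))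
        (Set.Finite.biUnion (Finset.finite_toSet _)
          (fun i hi => Set.not_infinite.mp (Finset.mem_filter.mp hi).2))
      intro n hn
      have hnm : n % m < m := Nat.mod_lt _ hm0
      by_cases hinf2 : (X ∩ {n' | n' % m = n % m}).Infinite
      · right
        have : n % m ∈ Lf := Finset.mem_filter.mpr ⟨Finset.mem_range.mpr hnm, hinf2⟩
        rw [hr] at this
        simpa using this
      · left
        refine Set.mem_biUnion ?_ ⟨hn, rfl⟩
        exact Finset.mem_filter.mpr ⟨Finset.mem_range.mpr hnm, hinf2⟩
    calc upperDensity X ≤ 1 / (m : ℝ) := hbound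
      _ = 1 / (2 * k) := by rw [hm]; push_cast; ring
end

section
/- For every d ∈ ℕ there exists a countably infinite graph H_d which is simultaneously d-wise intersecting, d-degenerate, and 0-ruled. -/
/-!
Build the graph on ℕ by giving each vertex `n` a finite set `g n` of earlier "parents" and joining
`n` to them. If every set with at most `d` elements is the parent set of infinitely many vertices,
the graph is `d`-wise intersecting; the natural order witnesses `d`-degeneracy since the earlier
neighbours of `n` are its parents; and a late vertex with no parents has no neighbour in a given
finite set, so the graph is `0`-ruled.
-/

theorem exists_parents_occurring_unboundedly (P : Finset ℕ → Prop) (h0 : P ∅) :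
    ∃ g : ℕ → Finset ℕ, (∀ n, ∀ x ∈ g n, x < n) ∧ (∀ n, P (g n)) ∧
      ∀ S, P S → ∀ m, ∃ n, m < n ∧ g n = S := by
  classical
  obtain ⟨p, hp⟩ := exists_surjective_nat (Finset ℕ)
  -- `n` proposes the set `p n.unpair.1`, accepted once all its elements are below `n`
  let g : ℕ → Finset ℕ := fun n =>
    if P (p n.unpair.1) ∧ ∀ x ∈ p n.unpair.1, x < n then p n.unpair.1 else ∅
  refine ⟨g, fun n x hx => ?_, fun n => ?_, fun S hS m => ?_⟩
  · by_cases h : P (p n.unpair.1) ∧ ∀ x ∈ p n.unpair.1, x < n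
    · simp only [g, if_pos h] at hx
      exact h.2 x hx
    · simp [g, if_neg h] at hx
  · by_cases h : P (p n.unpair.1) ∧ ∀ x ∈ p n.unpair.1, x < n
    · simpa only [g, if_pos h] using h.1
    · simpa only [g, if_neg h] using h0
  · obtain ⟨a, rfl⟩ := hp S
    have hb : m + (p a).sup id < Nat.pair a (m + (p a).sup id + 1) :=
      Nat.lt_of_lt_of_le (Nat.lt_succ_self _) (Nat.right_le_pair _ _)
    refine ⟨Nat.pair a (m + (p a).sup id + 1), by omega, ?_⟩
    have hlt : ∀ x ∈ p a, x < Nat.pair a (m + (p a).sup id + 1) := fun x hx => by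
      have := Finset.le_sup (f := id) hx
      simp only [id] at this
      omega
    simp only [g, Nat.unpair_pair, if_pos (And.intro hS hlt)]

def SimpleGraph.fromParents (g : ℕ → Finset ℕ) : SimpleGraph ℕ :=
  SimpleGraph.fromRel fun u v => v ∈ g u

namespace SimpleGraph.fromParents

variable {g : ℕ → Finset ℕ}

theorem adj_iff (hg : ∀ n, ∀ x ∈ g n, x < n) {u v : ℕ} :
    (fromParents g).Adj u v ↔ v ∈ g u ∨ u ∈ g v := by
  refine ⟨fun h => h.2, fun h => ⟨?_, h⟩⟩
  rintro rfl
  rcases h with h | h <;> exact lt_irrefl u (hg u u h)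

theorem setOf_forall_adj_infinite (hg : ∀ n, ∀ x ∈ g n, x < n) {S : Finset ℕ}
    (hS : ∀ m, ∃ n, m < n ∧ g n = S) : {w | ∀ v ∈ S, (fromParents g).Adj w v}.Infinite := by
  refine Set.infinite_of_forall_exists_gt fun m => ?_
  obtain ⟨n, hmn, rfl⟩ := hS m
  exact ⟨n, fun v hv => (adj_iff hg).2 (Or.inl hv), hmn⟩

theorem ncard_earlier_adj_le (hg : ∀ n, ∀ x ∈ g n, x < n) (i : ℕ) :
    {j | j < i ∧ (fromParents g).Adj i j}.ncard ≤ (g i).card := by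
  have hsub : {j | j < i ∧ (fromParents g).Adj i j} ⊆ ↑(g i) := by
    rintro j ⟨hji, hadj⟩
    rcases (adj_iff hg).1 hadj with h | h
    · exact h
    · exact absurd (hg j i h) (not_lt.2 hji.le)
  simpa using Set.ncard_le_ncard hsub (g i).finite_toSet

theorem exists_not_mem_forall_not_adj (hg : ∀ n, ∀ x ∈ g n, x < n)
    (hempty : ∀ m, ∃ n, m < n ∧ g n = ∅) (F : Finset ℕ) :
    ∃ v, v ∉ F ∧ ∀ u ∈ F, ¬ (fromParents g).Adj v u := by
  obtain ⟨n, hn, hgn⟩ := hempty (F.sup id)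
  have hlt : ∀ u ∈ F, u < n := fun u hu => (Finset.le_sup (f := id) hu).trans_lt hn
  refine ⟨n, fun h => lt_irrefl n (hlt n h), fun u hu hadj => ?_⟩
  rcases (adj_iff hg).1 hadj with h | h
  · simp [hgn] at h
  · exact lt_asymm (hlt u hu) (hg u n h)

end SimpleGraph.fromParents

theorem stmt_18 (d : ℕ) :
    ∃ H : SimpleGraph ℕ,
      (∀ S : Finset ℕ, S.card ≤ d → {w : ℕ | ∀ v ∈ S, H.Adj w v}.Infinite) ∧
      (∃ e : ℕ ≃ ℕ, ∀ i : ℕ, {j : ℕ | j < i ∧ H.Adj (e i) (e j)}.ncard ≤ d) ∧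
      (∀ F : Finset ℕ, ∃ v : ℕ, v ∉ F ∧ ∀ u ∈ F, ¬ H.Adj v u) := by
  obtain ⟨g, hg, hcard, hocc⟩ :=
    exists_parents_occurring_unboundedly (fun S => S.card ≤ d) (Nat.zero_le d)
  refine ⟨SimpleGraph.fromParents g, fun S hS =>
    SimpleGraph.fromParents.setOf_forall_adj_infinite hg (hocc S hS),
    ⟨Equiv.refl ℕ, fun i => (SimpleGraph.fromParents.ncard_earlier_adj_le hg i).trans (hcard i)⟩,
    SimpleGraph.fromParents.exists_not_mem_forall_not_adj hg (hocc ∅ (Nat.zero_le d))⟩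
end

section
/- Let F be a connected graph containing arbitrarily long paths all of whose internal vertices have degree 2 in F, and let H be an infinitely connected countably infinite graph containing an infinite clique. Then H contains a spanning copy of F, i.e., there is an embedding of F into H whose image is all of V(H). -/
/-!
Back and forth over finite partial embeddings of `F` into `H` that send every vertex with an
unmapped neighbour into the infinite clique `K`. A new vertex of `F` goes to a fresh vertex of `K`,
which is adjacent to the images of all its mapped neighbours. To cover a vertex `w` of `H`, run a
path of `H` between two fresh vertices of `K` through `w` avoiding the current image (infinite
connectivity), and map onto it a bare path of `F` of the same length avoiding the current domain
(pigeonhole inside a long bare path): its interior vertices have degree 2, so no neighbours beyond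
the path, and its two ends land in `K`.
-/

open Function Set

theorem Set.exists_bijective_of_directed {ι α β : Type*} (s : ι → Set (α × β))
    (hs : Directed (· ⊆ ·) s) (hfst : ∀ i, (s i).InjOn Prod.fst)
    (hsnd : ∀ i, (s i).InjOn Prod.snd) (hdom : ∀ a, ∃ i, a ∈ Prod.fst '' s i)
    (hran : ∀ b, ∃ i, b ∈ Prod.snd '' s i) :
    ∃ f : α → β, Bijective f ∧ ∀ a a', ∃ i, (a, f a) ∈ s i ∧ (a', f a') ∈ s i := by
  simp only [mem_image, Prod.exists, exists_and_right, exists_eq_right] at hdom hran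
  choose i f hf using hdom
  have both : ∀ a a', ∃ k, (a, f a) ∈ s k ∧ (a', f a') ∈ s k := fun a a' ↦
    let ⟨k, hik, hi'k⟩ := hs (i a) (i a')
    ⟨k, hik (hf a), hi'k (hf a')⟩
  refine ⟨f, ⟨fun a a' h ↦ ?_, fun b ↦ ?_⟩, both⟩
  · obtain ⟨k, ha, ha'⟩ := both a a'
    exact congrArg Prod.fst (hsnd k ha ha' h)
  · obtain ⟨j, a, hab⟩ := hran b
    obtain ⟨k, hjk, hik⟩ := hs j (i a)
    exact ⟨a, congrArg Prod.snd (hfst k (hik (hf a)) (hjk hab) rfl)⟩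

theorem Set.InjOn.union_image {ι γ δ : Type*} {f : γ → δ} {g : ι → γ} {s : Set γ}
    {t : Set ι} (hs : s.InjOn f) (ht : t.InjOn (f ∘ g)) (hst : ∀ i ∈ t, f (g i) ∉ f '' s) :
    (s ∪ g '' t).InjOn f := by
  have hdisj : Disjoint s (g '' t) :=
    disjoint_left.2 fun a ha ⟨i, hi, hai⟩ ↦ hst i hi ⟨a, ha, by rw [hai]⟩
  refine (injOn_union hdisj).2 ⟨hs, ht.image_of_comp, ?_⟩
  rintro a ha _ ⟨i, hi, rfl⟩ h
  exact hst i hi ⟨a, ha, h⟩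

theorem Nat.exists_block_notMem {α : Type*} {f : ℕ → α} {N : ℕ} (hf : InjOn f (Iio N))
    (A : Finset α) {n : ℕ} (hN : (A.card + 1) * (n + 1) ≤ N) :
    ∃ s, s + n < N ∧ ∀ i ≤ n, f (s + i) ∉ A := by
  by_contra! hall
  have hlt : ∀ k ∈ Finset.range (A.card + 1), ∀ j ≤ n, k * (n + 1) + j < N := fun k hk j hj ↦ by
    have := Nat.mul_le_mul_right (n + 1) (Finset.mem_range.1 hk)
    nlinarith
  have hquot : ∀ k, ∀ j ≤ n, (k * (n + 1) + j) / (n + 1) = k := fun k j hj ↦ by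
    rw [add_comm, Nat.add_mul_div_right _ _ n.succ_pos, Nat.div_eq_of_lt (by omega), zero_add]
  choose! i hin hiA using
    fun k (hk : k ∈ Finset.range (A.card + 1)) ↦ hall _ (hlt k hk n le_rfl)
  -- The blocks `k * (n + 1) + [0, n]`, `k ≤ #A`, are disjoint, so two of them cannot hit
  -- the same point of `A`.
  obtain ⟨k, hk, k', hk', hne, heq⟩ :=
    Finset.exists_ne_map_eq_of_card_lt_of_maps_to (by simp) (fun k hk ↦ hiA k hk)
  refine hne ?_
  rw [← hquot k _ (hin k hk), hf (hlt k hk _ (hin k hk)) (hlt k' hk' _ (hin k' hk')) heq,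
    hquot k' _ (hin k' hk')]

namespace SimpleGraph

variable {V : Type*} {G : SimpleGraph V}

theorem neighborSet_eq_pair_of_encard_eq_two {v a b : V} (h : (G.neighborSet v).encard = 2)
    (ha : G.Adj v a) (hb : G.Adj v b) (hab : a ≠ b) : G.neighborSet v = {a, b} :=
  ((toFinite {a, b}).eq_of_subset_of_encard_le (pair_subset ha hb)
    (h.trans (encard_pair hab).symm).le).symm

theorem Walk.IsPath.append {u v w : V} {p : G.Walk u v} {q : G.Walk v w} (hp : p.IsPath)
    (hq : q.IsPath) (h : ∀ x ∈ p.support, x ∈ q.support → x = v) : (p.append q).IsPath := by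
  have hq' := hq.support_nodup
  rw [← q.cons_tail_support, List.nodup_cons] at hq'
  rw [isPath_def, support_append, List.nodup_append]
  refine ⟨hp.support_nodup, hq'.2, fun x hx y hy hxy ↦ ?_⟩
  subst hxy
  exact hq'.1 (h x hx (List.mem_of_mem_tail hy) ▸ hy)

theorem Preconnected.exists_isPath_of_induce {s : Set V} (hs : (G.induce s).Preconnected)
    {x y : V} (hx : x ∈ s) (hy : y ∈ s) :
    ∃ p : G.Walk x y, p.IsPath ∧ ∀ z ∈ p.support, z ∈ s := by
  obtain ⟨p, hp⟩ := hs.exists_isPath ⟨x, hx⟩ ⟨y, hy⟩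
  have hsupp : ∀ z ∈ (p.map (Embedding.induce s).toHom).support, z ∈ s := by
    simp only [Walk.support_map, List.mem_map]
    rintro _ ⟨z, -, rfl⟩
    exact z.2
  exact ⟨_, hp.map Subtype.val_injective, hsupp⟩

theorem exists_isPath_ends_mem_through {K : Set V}
    (hG : ∀ D : Set V, D.Finite → (G.induce Dᶜ).Connected) (hK : K.Infinite) {B : Set V}
    (hB : B.Finite) {w : V} (hw : w ∉ B) :
    ∃ (k₁ k₂ : V) (P : G.Walk k₁ k₂), P.IsPath ∧ k₁ ∈ K ∧ k₂ ∈ K ∧ w ∈ P.support ∧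
      ∀ z ∈ P.support, z ∉ B := by
  obtain ⟨k₁, hk₁K, hk₁B⟩ := (hK.sdiff hB).nonempty
  obtain ⟨Q, hQ, hQB⟩ := (hG B hB).preconnected.exists_isPath_of_induce hk₁B hw
  set B' := (B ∪ {z | z ∈ Q.support}) \ {w}
  have hB' : B'.Finite := (hB.union Q.support.finite_toSet).sdiff
  obtain ⟨k₂, hk₂K, hk₂B⟩ := (hK.sdiff (hB.union Q.support.finite_toSet)).nonempty
  obtain ⟨R, hR, hRB'⟩ := (hG B' hB').preconnected.exists_isPath_of_induce
    (fun h ↦ h.2 rfl) (fun h ↦ hk₂B h.1)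
  refine ⟨k₁, k₂, Q.append R, hQ.append hR fun z hzQ hzR ↦ ?_, hk₁K, hk₂K,
    (Walk.mem_support_append_iff _ _).2 (.inl Q.end_mem_support), fun z hz ↦ ?_⟩
  · by_contra hzw
    exact hRB' z hzR ⟨.inr hzQ, hzw⟩
  · rcases (Walk.mem_support_append_iff _ _).1 hz with hz | hz
    · exact hQB z hz
    · exact fun hzB ↦ hRB' z hz ⟨.inl hzB, fun h ↦ hw (h ▸ hzB)⟩

theorem Walk.IsPath.exists_bare_segment {u v : V} {P : G.Walk u v} (hP : P.IsPath)
    (hdeg : ∀ y ∈ P.support, y ≠ u → y ≠ v → (G.neighborSet y).encard = 2)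
    (A : Finset V) {n : ℕ} (hlen : (A.card + 3) * (n + 1) ≤ P.length) :
    ∃ x : ℕ → V, InjOn x (Iic n) ∧ (∀ i ≤ n, x i ∉ A) ∧
      ∀ i, 0 < i → i < n → G.neighborSet (x i) ⊆ {x (i - 1), x (i + 1)} := by
  classical
  have hcard : (insert u (insert v A)).card + 1 ≤ A.card + 3 := by
    have := Finset.card_insert_le v A
    have := Finset.card_insert_le u (insert v A)
    omega
  obtain ⟨s, hsN, hs⟩ := Nat.exists_block_notMem (n := n)
    (hP.getVert_injOn.mono fun i (hi : i < P.length + 1) ↦ Nat.lt_succ_iff.1 hi)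
    (insert u (insert v A)) (by nlinarith [Nat.mul_le_mul_right (n + 1) hcard])
  have hinj : InjOn (fun i ↦ P.getVert (s + i)) (Iic n) :=
    fun i (hi : i ≤ n) j (hj : j ≤ n) h ↦ by
      have := hP.getVert_injOn (show s + i ≤ P.length by omega) (show s + j ≤ P.length by omega) h
      omega
  refine ⟨fun i ↦ P.getVert (s + i), hinj, fun i hi hA ↦ hs i hi (by simp [hA]),
    fun i h0 hin ↦ ?_⟩
  have hfree := hs i hin.le
  simp only [Finset.mem_insert, not_or] at hfree
  have hprev := P.adj_getVert_succ (i := s + (i - 1)) (by omega)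
  rw [show s + (i - 1) + 1 = s + i by omega] at hprev
  have hne : P.getVert (s + (i - 1)) ≠ P.getVert (s + (i + 1)) := fun h ↦ by
    have := hinj (show i - 1 ≤ n by omega) (show i + 1 ≤ n by omega) h
    omega
  exact (neighborSet_eq_pair_of_encard_eq_two
    (hdeg _ (P.getVert_mem_support _) hfree.1 hfree.2.1) hprev.symm
    (P.adj_getVert_succ (by omega)) hne).subset

end SimpleGraph

section AnchoredPartialEmbedding

open SimpleGraph

variable {V W : Type*} {F : SimpleGraph V} {H : SimpleGraph W} {K : Set W} {p : Set (V × W)}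

structure IsAnchoredPartialEmbedding (F : SimpleGraph V) (H : SimpleGraph W) (K : Set W)
    (p : Set (V × W)) : Prop where
  finite : p.Finite
  injOn_fst : p.InjOn Prod.fst
  injOn_snd : p.InjOn Prod.snd
  adj : ∀ ⦃a b⦄, a ∈ p → b ∈ p → F.Adj a.1 b.1 → H.Adj a.2 b.2
  mem_of_adj_notMem : ∀ ⦃a⦄, a ∈ p → ∀ ⦃c⦄, F.Adj a.1 c → c ∉ Prod.fst '' p → a.2 ∈ K

theorem isAnchoredPartialEmbedding_empty : IsAnchoredPartialEmbedding F H K ∅ :=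
  ⟨finite_empty, injOn_empty _, injOn_empty _, fun _ _ h ↦ h.elim, fun _ h ↦ h.elim⟩

namespace IsAnchoredPartialEmbedding

theorem union_walk (hKP : K.Pairwise H.Adj) (hp : IsAnchoredPartialEmbedding F H K p)
    {k₁ k₂ : W} (P : H.Walk k₁ k₂) (hP : P.IsPath) (hk₁ : k₁ ∈ K) (hk₂ : k₂ ∈ K)
    (hPp : ∀ z ∈ P.support, z ∉ Prod.snd '' p) (x : ℕ → V) (hx : InjOn x (Iic P.length))
    (hxp : ∀ i ≤ P.length, x i ∉ Prod.fst '' p)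
    (hxF : ∀ i, 0 < i → i < P.length → F.neighborSet (x i) ⊆ {x (i - 1), x (i + 1)}) :
    IsAnchoredPartialEmbedding F H K (p ∪ (fun i ↦ (x i, P.getVert i)) '' Iic P.length) := by
  set n := P.length
  set q := (fun i ↦ (x i, P.getVert i)) '' Iic n
  have injOn_fst : (p ∪ q).InjOn Prod.fst := hp.injOn_fst.union_image hx hxp
  have injOn_snd : (p ∪ q).InjOn Prod.snd :=
    hp.injOn_snd.union_image hP.getVert_injOn fun i _ ↦ hPp _ (P.getVert_mem_support i)
  have hclique : ∀ ⦃a b⦄, a ∈ p ∪ q → b ∈ p ∪ q → F.Adj a.1 b.1 → a.2 ∈ K → b.2 ∈ K →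
      H.Adj a.2 b.2 := fun a b ha hb hab haK hbK ↦
    hKP haK hbK fun h ↦ hab.ne (congrArg Prod.fst (injOn_snd ha hb h))
  have classify : ∀ a ∈ p ∪ q, a ∈ p ∨ (∃ i, 0 < i ∧ i < n ∧ a = (x i, P.getVert i)) ∨
      (a.1 ∉ Prod.fst '' p ∧ a.2 ∈ K) := by
    rintro a (ha | ⟨i, hi, rfl⟩)
    · exact .inl ha
    · rcases Nat.eq_zero_or_pos i with rfl | hi0
      · exact .inr (.inr ⟨hxp 0 hi, by simpa using hk₁⟩)
      rcases (show i ≤ n from hi).lt_or_eq with hin | rfl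
      · exact .inr (.inl ⟨i, hi0, hin, rfl⟩)
      · exact .inr (.inr ⟨hxp n hi, by simpa [n] using hk₂⟩)
  have interior : ∀ i, 0 < i → i < n → ∀ b ∈ p ∪ q, F.Adj (x i) b.1 →
      H.Adj (P.getVert i) b.2 := by
    intro i hi0 hin b hb hib
    rcases hb with hb | ⟨j, hj, rfl⟩
    · rcases hxF i hi0 hin hib with h | h
      · exact absurd ⟨b, hb, h⟩ (hxp (i - 1) (by omega))
      · exact absurd ⟨b, hb, h⟩ (hxp (i + 1) (by omega))
    rcases hxF i hi0 hin hib with h | h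
    · obtain rfl : j = i - 1 := hx hj (show i - 1 ≤ n by omega) h
      have := P.adj_getVert_succ (i := i - 1) (by omega)
      rw [Nat.sub_add_cancel hi0] at this
      exact this.symm
    · obtain rfl : j = i + 1 := hx hj (show i + 1 ≤ n by omega) h
      exact P.adj_getVert_succ hin
  refine ⟨hp.finite.union ((finite_Iic n).image _), injOn_fst, injOn_snd, ?_, ?_⟩
  · intro a b ha hb hab
    rcases classify a ha with ha' | ⟨i, hi0, hin, rfl⟩ | ha'
    · rcases classify b hb with hb' | ⟨j, hj0, hjn, rfl⟩ | hb'
      · exact hp.adj ha' hb' hab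
      · exact (interior j hj0 hjn _ ha hab.symm).symm
      · exact hclique ha hb hab (hp.mem_of_adj_notMem ha' hab hb'.1) hb'.2
    · exact interior i hi0 hin _ hb hab
    · rcases classify b hb with hb' | ⟨j, hj0, hjn, rfl⟩ | hb'
      · exact hclique ha hb hab ha'.2 (hp.mem_of_adj_notMem hb' hab.symm ha'.1)
      · exact (interior j hj0 hjn _ ha hab.symm).symm
      · exact hclique ha hb hab ha'.2 hb'.2
  · intro a ha c hac hc
    rcases classify a ha with ha' | ⟨i, hi0, hin, rfl⟩ | ha'
    · exact hp.mem_of_adj_notMem ha' hac fun h ↦ hc (image_mono subset_union_left h)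
    · rcases hxF i hi0 hin hac with rfl | rfl
      · exact absurd ⟨_, .inr ⟨i - 1, show i - 1 ≤ n by omega, rfl⟩, rfl⟩ hc
      · exact absurd ⟨_, .inr ⟨i + 1, show i + 1 ≤ n by omega, rfl⟩, rfl⟩ hc
    · exact ha'.2

end IsAnchoredPartialEmbedding

abbrev AnchoredPartialEmbedding (F : SimpleGraph V) (H : SimpleGraph W) (K : Set W) :=
  {p : Set (V × W) // IsAnchoredPartialEmbedding F H K p}

theorem AnchoredPartialEmbedding.isCofinal_mem_fst (hK : K.Infinite) (hKP : K.Pairwise H.Adj)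
    (v : V) : IsCofinal {q : AnchoredPartialEmbedding F H K | v ∈ Prod.fst '' q.1} := by
  rintro ⟨p, hp⟩
  by_cases hv : v ∈ Prod.fst '' p
  · exact ⟨⟨p, hp⟩, hv, le_rfl⟩
  obtain ⟨b, hbK, hbp⟩ := (hK.sdiff (hp.finite.image Prod.snd)).nonempty
  have hq := hp.union_walk hKP (Walk.nil : H.Walk b b) .nil hbK hbK (by simpa using hbp)
    (fun _ ↦ v) (fun i (hi : i ≤ 0) j (hj : j ≤ 0) _ ↦ by omega) (fun _ _ ↦ hv)
    fun i _ hi ↦ (i.not_lt_zero hi).elim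
  exact ⟨⟨_, hq⟩, ⟨(v, b), .inr ⟨0, Nat.zero_le _, rfl⟩, rfl⟩, subset_union_left⟩

theorem AnchoredPartialEmbedding.isCofinal_mem_snd
    (hH : ∀ D : Set W, D.Finite → (H.induce Dᶜ).Connected) (hK : K.Infinite)
    (hKP : K.Pairwise H.Adj)
    (hpaths : ∀ n : ℕ, ∃ (u v : V) (P : F.Walk u v), P.IsPath ∧ n ≤ P.length ∧
      ∀ x ∈ P.support, x ≠ u → x ≠ v → (F.neighborSet x).encard = 2)
    (w : W) : IsCofinal {q : AnchoredPartialEmbedding F H K | w ∈ Prod.snd '' q.1} := by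
  classical
  rintro ⟨p, hp⟩
  by_cases hw : w ∈ Prod.snd '' p
  · exact ⟨⟨p, hp⟩, hw, le_rfl⟩
  obtain ⟨k₁, k₂, P, hP, hk₁, hk₂, hwP, hPp⟩ :=
    exists_isPath_ends_mem_through hH hK (hp.finite.image Prod.snd) hw
  set A := (hp.finite.image Prod.fst).toFinset
  obtain ⟨u, v, Q, hQ, hQlen, hQdeg⟩ := hpaths ((A.card + 3) * (P.length + 1))
  obtain ⟨x, hx, hxA, hxF⟩ := hQ.exists_bare_segment hQdeg A hQlen
  obtain ⟨j, rfl, hj⟩ := Walk.mem_support_iff_exists_getVert.1 hwP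
  have hq := hp.union_walk hKP P hP hk₁ hk₂ hPp x hx (fun i hi ↦ by simpa [A] using hxA i hi) hxF
  exact ⟨⟨_, hq⟩, ⟨(x j, P.getVert j), .inr ⟨j, hj, rfl⟩, rfl⟩, subset_union_left⟩

end AnchoredPartialEmbedding

theorem stmt_19_general {V W : Type*} [Countable V] [Countable W]
    (F : SimpleGraph V)
    (hpaths : ∀ n : ℕ, ∃ (u v : V) (P : F.Walk u v), P.IsPath ∧ n ≤ P.length ∧
      ∀ x ∈ P.support, x ≠ u → x ≠ v → (F.neighborSet x).encard = 2)
    (H : SimpleGraph W)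
    (hH : ∀ D : Set W, D.Finite → (H.induce Dᶜ).Connected)
    (hclique : ∃ K : Set W, K.Infinite ∧ K.Pairwise H.Adj) :
    ∃ f : V → W, Function.Injective f ∧ Function.Surjective f ∧
      ∀ u v : V, F.Adj u v → H.Adj (f u) (f v) := by
  obtain ⟨K, hK, hKP⟩ := hclique
  have := Encodable.ofCountable V
  have := Encodable.ofCountable W
  let 𝒟 : V ⊕ W → Order.Cofinal (AnchoredPartialEmbedding F H K) :=
    Sum.elim (fun v ↦ ⟨_, AnchoredPartialEmbedding.isCofinal_mem_fst hK hKP v⟩)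
      (fun w ↦ ⟨_, AnchoredPartialEmbedding.isCofinal_mem_snd hH hK hKP hpaths w⟩)
  let s := Order.sequenceOfCofinals ⟨∅, isAnchoredPartialEmbedding_empty⟩ 𝒟
  obtain ⟨f, hf, hpair⟩ := Set.exists_bijective_of_directed (fun n ↦ (s n).1)
    ((Subtype.mono_coe _).comp (Order.sequenceOfCofinals.monotone _ 𝒟)).directed_le
    (fun n ↦ (s n).2.injOn_fst) (fun n ↦ (s n).2.injOn_snd)
    (fun v ↦ ⟨_, Order.sequenceOfCofinals.encode_mem _ 𝒟 (.inl v)⟩)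
    (fun w ↦ ⟨_, Order.sequenceOfCofinals.encode_mem _ 𝒟 (.inr w)⟩)
  refine ⟨f, hf.1, hf.2, fun u v huv ↦ ?_⟩
  obtain ⟨n, hu, hv⟩ := hpair u v
  exact (s n).2.adj hu hv huv

theorem stmt_19 {V W : Type*} [Countable V] [Infinite V] [Countable W] [Infinite W]
    (F : SimpleGraph V) (hconn : F.Connected)
    (hpaths : ∀ n : ℕ, ∃ (u v : V) (P : F.Walk u v), P.IsPath ∧ n ≤ P.length ∧
      ∀ x ∈ P.support, x ≠ u → x ≠ v → (F.neighborSet x).encard = 2)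
    (H : SimpleGraph W)
    (hH : ∀ D : Set W, D.Finite → (H.induce Dᶜ).Connected)
    (hclique : ∃ K : Set W, K.Infinite ∧ K.Pairwise H.Adj) :
    ∃ f : V → W, Function.Injective f ∧ Function.Surjective f ∧
      ∀ u v : V, F.Adj u v → H.Adj (f u) (f v) :=
  stmt_19_general F hpaths H hH hclique
end
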